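/- arXiv:1704.05802 — 5 statements merged into one kernel-verified Lean document; each statement's English description precedes it below -/
import Mathlib

section
/- Assume (OP) and (ind)_D hold for M̃ = ⟨M, P⟩ and D ⊆ M. Let f : P^n → P^k be an A-definable map in P_ind(D). Then there is an L_{A∪D}-definable map F : M^n → M^k that extends f. -/
open FirstOrder Language Set

universe u v w

namespace EIPaper

section Preamble

variable (L : FirstOrder.Language.{u, v}) (M : Type w) [L.Structure M]

/-- The definable closure of a parameter set `A` in the `L`-structure `M`:
`b ∈ dcl(A)` iff the singleton `{b}` is definable with parameters from `A`. -/
def dcl (A : Set M) : Set M :=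
  {b : M | A.Definable L ({fun _ : Fin 1 => b} : Set (Fin 1 → M))}

/-- `D` is `dcl`-independent over `P`. -/
def DclIndepOver (P D : Set M) : Prop :=
  ∀ d ∈ D, d ∉ dcl L M (P ∪ (D \ {d}))

/-- `P` is a `dcl`-independent set. -/
def DclIndep (P : Set M) : Prop :=
  ∀ p ∈ P, p ∉ dcl L M (P \ {p})

/-- A language with a single unary relation symbol (and nothing else). -/
def unaryLang : FirstOrder.Language :=
  ⟨fun _ => Empty, fun n => match n with | 1 => Unit | _ => Empty⟩

/-- The structure on `M` in `unaryLang` interpreting the unary relation as `P`. -/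
def unaryStructure (P : Set M) : unaryLang.Structure M where
  funMap := fun {_} f _ => f.elim
  RelMap := fun {n} r v =>
    match n, r with
    | 1, _ => v 0 ∈ P

/-- The language `L(P)` of the pair: `L` together with a new unary predicate. -/
def Lpair : FirstOrder.Language := L.sum unaryLang

/-- The structure of the pair `⟨M, P⟩` on `M`. -/
def pairStructure (P : Set M) : (Lpair L).Structure M :=
  letI := unaryStructure M P
  Language.sumStructure L unaryLang M

/-- `S` is definable with parameters from `A` in the pair `⟨M, P⟩`. -/
def PairDef (P A : Set M) {α : Type*} (S : Set (α → M)) : Prop :=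
  letI := pairStructure L M P
  A.Definable (Lpair L) S

/-- Definable closure in the pair `⟨M, P⟩`. -/
def dclPair (P A : Set M) : Set M :=
  {b : M | PairDef L M P A ({fun _ : Fin 1 => b} : Set (Fin 1 → M))}

/-- The language of the `D`-induced structure on `P`: for each `L`-formula with parameters
from `D` in `n` free variables, an `n`-ary relation symbol. -/
def indLang (D : Set M) : FirstOrder.Language :=
  ⟨fun _ => Empty, fun n => (L[[D]]).Formula (Fin n)⟩

/-- The `D`-induced structure on `P` by `M`. -/
def indStructure (P D : Set M) : (indLang L M D).Structure ↥P where
  funMap := fun {_} f _ => f.elim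
  RelMap := fun {n} φ v => Formula.Realize (M := M) φ (fun i => (v i : M))

/-- `S` is definable with parameters from `A ⊆ P` in the induced structure `P_ind(D)`. -/
def IndDef (P D : Set M) (A : Set ↥P) {α : Type*} (S : Set (α → ↥P)) : Prop :=
  letI := indStructure L M P D
  A.Definable (indLang L M D) S

/-- Definable closure in the induced structure `P_ind(D)`. -/
def clInd (P D : Set M) (A : Set ↥P) : Set ↥P :=
  {b : ↥P | IndDef L M P D A ({fun _ : Fin 1 => b} : Set (Fin 1 → ↥P))}

/-- A structure `N` eliminates imaginaries if for every `∅`-definable equivalence relation `E`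
on `N^n` there are `l` and a `∅`-definable map `f : N^n → N^l` such that
`E x y ↔ f x = f y`. -/
def ElimImaginaries (L' : FirstOrder.Language) (N : Type*) [L'.Structure N] : Prop :=
  ∀ (n : ℕ) (E : (Fin n → N) → (Fin n → N) → Prop), Equivalence E →
    (∅ : Set N).Definable L'
      {p : (Fin n ⊕ Fin n) → N | E (fun i => p (Sum.inl i)) (fun i => p (Sum.inr i))} →
    ∃ (l : ℕ) (f : (Fin n → N) → (Fin l → N)),
      (∅ : Set N).Definable L'
        {p : (Fin n ⊕ Fin l) → N | (fun i => p (Sum.inr i)) = f (fun i => p (Sum.inl i))} ∧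
      ∀ x y : Fin n → N, E x y ↔ f x = f y

/-- The induced structure `P_ind(D)` eliminates imaginaries. -/
def IndElimImaginaries (P D : Set M) : Prop :=
  letI := indStructure L M P D
  ElimImaginaries (indLang L M D) ↥P

/-- Topological closure with respect to (the product of) the order topology. -/
def ordClosure [LinearOrder M] {α : Type*} (S : Set (α → M)) : Set (α → M) :=
  letI : TopologicalSpace M := Preorder.topology M
  closure S

/-- Topological interior with respect to (the product of) the order topology. -/
def ordInterior [LinearOrder M] {α : Type*} (S : Set (α → M)) : Set (α → M) :=
  letI : TopologicalSpace M := Preorder.topology M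
  interior S

/-- `P` is dense in `M` with respect to the order topology. -/
def DenseIn [LinearOrder M] (P : Set M) : Prop :=
  letI : TopologicalSpace M := Preorder.topology M
  Dense P

/-- The cartesian power `P^α` inside `M^α`. -/
def cube (P : Set M) (α : Type*) : Set (α → M) := {x | ∀ i, x i ∈ P}

/-- Property (OP): for every parameter set `A` with `A \ P` dcl-independent over `P`, the
topological closure of any `A`-definable (in the pair) set is `L_A`-definable. -/
def OP [LinearOrder M] (P : Set M) : Prop :=
  ∀ A : Set M, DclIndepOver L M P (A \ P) →
    ∀ (n : ℕ) (V : Set (Fin n → M)), PairDef L M P A V →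
      A.Definable L (ordClosure M V)

/-- Property (dcl)_D. -/
def DclD (P D : Set M) : Prop :=
  ∀ B C : Set M, B ⊆ P → C ⊆ P →
    dcl L M ((dcl L M (B ∪ D) ∩ dcl L M (C ∪ D) ∩ P) ∪ D)
      = dcl L M (B ∪ D) ∩ dcl L M (C ∪ D)

/-- Property (ind)_D: every `A`-definable set in `P_ind(D)` is the trace on the corresponding
power of `P` of an `L_{A ∪ D}`-definable set. -/
def IndD (P D : Set M) : Prop :=
  ∀ (A : Set ↥P) (n : ℕ) (X : Set (Fin n → ↥P)), IndDef L M P D A X →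
    ∃ Y : Set (Fin n → M), (Subtype.val '' A ∪ D).Definable L Y ∧
      X = {x : Fin n → ↥P | (fun i => (x i : M)) ∈ Y}

/-- Property (dcl')_D. -/
def DclD' (P D : Set M) : Prop :=
  ∀ α ∈ dcl L M (P ∪ D), ∃ (k : ℕ) (q : Fin k → M),
    (∀ i, q i ∈ P) ∧ dcl L M (Set.range q ∪ D) = dclPair L M P ({α} ∪ D)

/-- `X ⊆ M^n` is `P`-bound over `A`: there is an `L_A`-definable function `h : M^m → M^n`
with `X ⊆ h(P^m)`. -/
def PBound (P A : Set M) {n : ℕ} (X : Set (Fin n → M)) : Prop :=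
  ∃ (m : ℕ) (h : (Fin m → M) → (Fin n → M)),
    A.Definable L
      {p : (Fin m ⊕ Fin n) → M | (fun i => p (Sum.inr i)) = h (fun i => p (Sum.inl i))} ∧
    X ⊆ h '' cube M P (Fin m)

/-- A subset of a linear order is a point, an open interval, or the whole line. -/
def IsIntervalOrPoint [LinearOrder M] (s : Set M) : Prop :=
  (∃ a, s = {a}) ∨ (∃ a b, s = Set.Ioo a b) ∨ (∃ a, s = Set.Iio a) ∨
    (∃ a, s = Set.Ioi a) ∨ s = Set.univ

end Preamble

/-- `M` is an o-minimal expansion of an ordered group with a distinguished positive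
element `1`: the order, the addition and `1` are `∅`-definable, `0 < 1`, and every set
definable (in `M`, with arbitrary parameters) is a finite union of points and intervals. -/
structure OMinOrderedGroup (L : FirstOrder.Language.{u, v}) (M : Type w) [L.Structure M]
    [AddCommGroup M] [LinearOrder M] [IsOrderedAddMonoid M] [One M] : Prop where
  one_pos : (0 : M) < 1
  lt_def : (∅ : Set M).Definable L {x : Fin 2 → M | x 0 < x 1}
  add_def : (∅ : Set M).Definable L {x : Fin 3 → M | x 0 + x 1 = x 2}
  one_def : (∅ : Set M).Definable L ({fun _ : Fin 1 => (1 : M)} : Set (Fin 1 → M))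
  omin : ∀ s : Set M, (Set.univ : Set M).Definable L {x : Fin 1 → M | x 0 ∈ s} →
    ∃ (k : ℕ) (t : Fin k → Set M), (∀ i, IsIntervalOrPoint M (t i)) ∧ s = ⋃ i, t i

end EIPaper

namespace EIPaper

section Preamble2

variable (L : FirstOrder.Language.{u, v}) (M : Type w) [L.Structure M]

/-- `P` is (the universe of) an elementary substructure of `M`, via the Tarski–Vaught test:
any `L`-formula with parameters from `P` that has a witness in `M` has a witness in `P`. -/
def IsElemSubset (P : Set M) : Prop :=
  ∀ (n : ℕ) (φ : L.Formula (Fin (n + 1))) (x : Fin n → M), (∀ i, x i ∈ P) →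
    (∃ y : M, φ.Realize (Fin.snoc x y)) → ∃ y ∈ P, φ.Realize (Fin.snoc x y)

/-- `P^n` is dense in `X ⊆ M^n` with respect to the (product of the) order topology. -/
def DenseInSet [LinearOrder M] {n : ℕ} (P : Set M) (X : Set (Fin n → M)) : Prop :=
  ordClosure M (cube M P (Fin n) ∩ X) = ordClosure M X

/-- The o-minimal dimension of `X ⊆ M^n`: the largest `k` such that the projection of `X`
to some `k` coordinates has nonempty interior. -/
noncomputable def odim [LinearOrder M] {n : ℕ} (X : Set (Fin n → M)) : ℕ :=
  sSup {k : ℕ | ∃ ρ : Fin k → Fin n, Function.Injective ρ ∧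
    (ordInterior M ((fun x : Fin n → M => fun i : Fin k => x (ρ i)) '' X)).Nonempty}

/-- The `L_P`-extension property: every `L`-definable, `A`-definable (in the pair) set `X`
in which `P^n` is dense extends to an `L_P`-definable, `A`-definable set of the same
dimension. -/
def LPExtension [LinearOrder M] (P : Set M) : Prop :=
  ∀ (A : Set M) (n : ℕ) (X : Set (Fin n → M)),
    (Set.univ : Set M).Definable L X → PairDef L M P A X → DenseInSet M P X →
    ∃ Y : Set (Fin n → M), P.Definable L Y ∧ PairDef L M P A Y ∧ X ⊆ Y ∧
      odim M Y = odim M X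

end Preamble2

/-- An ordered field is real closed if every nonnegative element has a square root and every
polynomial of odd degree has a root. -/
def IsRealClosedField (K : Type*) [Field K] [LinearOrder K] [IsStrictOrderedRing K] : Prop :=
  (∀ x : K, 0 ≤ x → ∃ y, y ^ 2 = x) ∧
    ∀ p : Polynomial K, Odd p.natDegree → ∃ x, Polynomial.eval x p = 0

/-- The language of ordered rings: constants `0, 1`, unary `-`, binary `+, ·`, and `<`. -/
def oRing : FirstOrder.Language :=
  ⟨fun n => match n with | 0 => Fin 2 | 1 => Unit | 2 => Fin 2 | _ => Empty,
   fun n => match n with | 2 => Unit | _ => Empty⟩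

/-- The natural `oRing`-structure on an ordered field. -/
noncomputable instance oRingStructure (K : Type*) [Field K] [LinearOrder K] [IsStrictOrderedRing K] :
    oRing.Structure K where
  funMap := fun {n} f v =>
    match n, f with
    | 0, c => (![(0 : K), 1]) c
    | 1, _ => -v 0
    | 2, f => (![v 0 + v 1, v 0 * v 1]) f
  RelMap := fun {n} r v =>
    match n, r with
    | 2, _ => v 0 < v 1

/-- A subset `G` of a field has the Mann property if for all `a_1, …, a_r` the equation
`a_1 x_1 + ⋯ + a_r x_r = 1` has only finitely many nondegenerate solutions in `G^r`. -/
def MannProperty (K : Type*) [Field K] (G : Set K) : Prop :=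
  ∀ (r : ℕ) (a : Fin r → K),
    {q : Fin r → K | (∀ i, q i ∈ G) ∧ (∑ i, a i * q i = 1) ∧
      ∀ I : Finset (Fin r), I.Nonempty → ∑ i ∈ I, a i * q i ≠ 0}.Finite

/-- `N` is `κ`-saturated: every finitely realizable set of formulas in one free variable over
a parameter set of size `< κ` is realized in `N`. -/
def IsSaturatedIn (L' : FirstOrder.Language) (N : Type*) [L'.Structure N] (κ : Cardinal) :
    Prop :=
  ∀ A : Set N, Cardinal.mk A < κ →
    ∀ T : Set ((L'[[A]]).Formula (Fin 1)),
      (∀ s : Finset ((L'[[A]]).Formula (Fin 1)), ↑s ⊆ T →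
        ∃ x : Fin 1 → N, ∀ φ ∈ s, φ.Realize x) →
      ∃ x : Fin 1 → N, ∀ φ ∈ T, φ.Realize x

/-- The definable closure in `N` satisfies the exchange property, i.e. `N` is pregeometric. -/
def HasExchange (L' : FirstOrder.Language) (N : Type*) [L'.Structure N] : Prop :=
  ∀ (A : Set N) (a b : N), a ∈ dcl L' N (A ∪ {b}) → a ∉ dcl L' N A → b ∈ dcl L' N (A ∪ {a})

section Toolkit

variable {L' : FirstOrder.Language.{u, v}} {N : Type w} [L'.Structure N] {C : Set N}
  {γ δ : Type*}

lemma dpull {S : Set (δ → N)} (h : C.Definable L' S) (g : δ → γ) :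
    C.Definable L' {x : γ → N | (fun i => x (g i)) ∈ S} :=
  h.preimage_comp g

lemma dexists {S : Set ((γ ⊕ Fin 1) → N)} (h : C.Definable L' S) :
    C.Definable L' {x : γ → N | ∃ y : N, Sum.elim x (fun _ => y) ∈ S} := by
  have h2 := h.image_comp_sumInl_fin 1
  convert h2 using 1
  ext x
  simp only [Set.mem_image, Set.mem_setOf_eq]
  constructor
  · rintro ⟨y, hy⟩
    exact ⟨Sum.elim x (fun _ => y), hy, Sum.elim_comp_inl _ _⟩
  · rintro ⟨w, hw, rfl⟩
    refine ⟨w (Sum.inr 0), ?_⟩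
    have : Sum.elim (w ∘ Sum.inl) (fun _ : Fin 1 => w (Sum.inr 0)) = w := by
      funext i
      rcases i with i | j
      · rfl
      · rw [Fin.eq_zero j]
        rfl
    rw [this]
    exact hw

lemma dforall {S : Set ((γ ⊕ Fin 1) → N)} (h : C.Definable L' S) :
    C.Definable L' {x : γ → N | ∀ y : N, Sum.elim x (fun _ => y) ∈ S} := by
  have h2 := (dexists h.compl).compl
  convert h2 using 1
  ext x
  simp only [Set.mem_compl_iff, Set.mem_setOf_eq, not_exists, not_not]

lemma deq {C : Set N} {γ : Type*} (a b : γ) :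
    C.Definable L' {x : γ → N | x a = x b} := by
  refine ⟨Term.equal (Term.var a) (Term.var b), ?_⟩
  ext x
  simp

lemma dslice {S : Set ((γ ⊕ δ) → N)} (h : C.Definable L' S) (v : γ → N) :
    (Set.univ : Set N).Definable L' {w : δ → N | Sum.elim v w ∈ S} := by
  obtain ⟨φ, hφ⟩ := h.mono (Set.subset_univ C)
  classical
  refine ⟨φ.subst (Sum.elim (fun i => Constants.term (L'.con ⟨v i, trivial⟩))
    (fun j => Term.var j)), ?_⟩
  ext w
  simp only [Set.mem_setOf_eq, hφ, Formula.Realize, BoundedFormula.realize_subst]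
  have hfun : (fun a => Term.realize w (Sum.elim
      (fun i : γ => (Constants.term (L'.con (⟨v i, trivial⟩ : (univ : Set N)))))
      (fun j : δ => Term.var j) a)) = Sum.elim v w := by
    funext a
    rcases a with i | j
    · simp
    · rfl
  rw [hfun]

end Toolkit
section OrderFacts

variable {L : FirstOrder.Language.{u, v}} {M : Type w} [L.Structure M]
  [AddCommGroup M] [LinearOrder M] [IsOrderedAddMonoid M] [One M]

lemma dlt (hM : OMinOrderedGroup L M) {γ : Type*} (a b : γ) :
    (∅ : Set M).Definable L {x : γ → M | x a < x b} := by
  exact dpull hM.lt_def (g := (![a, b] : Fin 2 → γ))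

lemma dadd (hM : OMinOrderedGroup L M) {γ : Type*} (a b c : γ) :
    (∅ : Set M).Definable L {x : γ → M | x a + x b = x c} := by
  exact dpull hM.add_def (g := (![a, b, c] : Fin 3 → γ))

lemma dmem1 {C : Set M} {s : Set M} (hs : C.Definable L {x : Fin 1 → M | x 0 ∈ s})
    {γ : Type*} (a : γ) : C.Definable L {x : γ → M | x a ∈ s} :=
  dpull hs (fun _ => a)

theorem dense_M (hM : OMinOrderedGroup L M) : ∀ a b : M, a < b → ∃ c, a < c ∧ c < b := by
  by_contra hcon
  push_neg at hcon
  obtain ⟨a, b, hab, hgap⟩ := hcon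
  set d := b - a with hd
  have hd0 : 0 < d := sub_pos.2 hab
  have gap : ∀ u c : M, u < c → c < u + d → False := by
    intro u c h1 h2
    have ha1 : a < c - u + a := lt_add_of_pos_left a (sub_pos.2 h1)
    have hb1 : c - u + a < b := by
      have : c - u < d := by
        have := sub_lt_sub_right h2 u
        rwa [add_sub_cancel_left] at this
      calc c - u + a < d + a := add_lt_add_left this a
        _ = b := by rw [hd]; abel
    exact absurd (hgap _ ha1) (not_le.2 hb1)
  set s : Set M := {x : M | ∃ y : M, y + y = x} with hs_def
  have hsdef : (Set.univ : Set M).Definable L {x : Fin 1 → M | x 0 ∈ s} := by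
    have t1 := (dadd hM (γ := Fin 1 ⊕ Fin 1) (Sum.inr 0) (Sum.inr 0) (Sum.inl 0)).mono
      (Set.subset_univ _)
    exact dexists t1
  obtain ⟨k, t, ht, hteq⟩ := hM.omin s hsdef
  have hts : ∀ i, t i ⊆ s := by
    intro i
    rw [hteq]
    exact Set.subset_iUnion t i
  have key : ∀ (i : Fin k) (u v : M), u ∈ t i → v ∈ t i → u < v → False := by
    intro i u v hu hv huv
    have hconv : Set.OrdConnected (t i) := by
      rcases ht i with ⟨c, h⟩ | ⟨c, e, h⟩ | ⟨c, h⟩ | ⟨c, h⟩ | h <;> rw [h]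
      · exact Set.ordConnected_singleton
      · exact Set.ordConnected_Ioo
      · exact Set.ordConnected_Iio
      · exact Set.ordConnected_Ioi
      · exact Set.ordConnected_univ
    have h1 : u + d ≤ v := by
      by_contra hlt
      exact gap u v huv (not_le.1 hlt)
    have h2 : u + d ∈ t i := hconv.out hu hv ⟨le_add_of_nonneg_right hd0.le, h1⟩
    obtain ⟨y, hy⟩ := hts i hu
    obtain ⟨y', hy'⟩ := hts i h2
    set e := y' - y with he_def
    have hee : e + e = d := by
      have h3 : (y' - y) + (y' - y) = (y' + y') - (y + y) := by abel
      rw [he_def, h3, hy, hy', add_sub_cancel_left]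
    have he0 : 0 < e := by
      by_contra hneg
      push_neg at hneg
      have : e + e ≤ 0 := add_nonpos hneg hneg
      rw [hee] at this
      exact absurd this (not_le.2 hd0)
    have hed : e < d := by
      rw [← hee]
      exact lt_add_of_pos_left e he0
    exact gap 0 e he0 (by rwa [zero_add])
  have hsub : ∀ i, (t i).Subsingleton := by
    intro i u hu v hv
    rcases lt_trichotomy u v with h | h | h
    · exact absurd (key i u v hu hv h) (fun h => h)
    · exact h
    · exact absurd (key i v u hv hu h) (fun h => h)
  have hfin : s.Finite := by
    rw [hteq]
    exact Set.finite_iUnion (fun i => (hsub i).finite)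
  have hinf : s.Infinite := by
    have hmono : StrictMono (fun j : ℕ => (j • (1 : M)) + (j • (1 : M))) := by
      intro m n hmn
      have h1 : m • (1 : M) < n • (1 : M) := nsmul_lt_nsmul_left hM.one_pos hmn
      exact add_lt_add h1 h1
    exact Set.infinite_of_injective_forall_mem hmono.injective (fun j => ⟨j • (1 : M), rfl⟩)
  exact hinf hfin

theorem finite_of_noIoo (hM : OMinOrderedGroup L M) {s : Set M}
    (hdef : (Set.univ : Set M).Definable L {x : Fin 1 → M | x 0 ∈ s})
    (hno : ∀ a b : M, a < b → ¬ (Set.Ioo a b ⊆ s)) : s.Finite := by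
  obtain ⟨k, t, ht, hteq⟩ := hM.omin s hdef
  have hts : ∀ i, t i ⊆ s := by
    intro i
    rw [hteq]
    exact Set.subset_iUnion t i
  rw [hteq]
  refine Set.finite_iUnion (fun i => ?_)
  rcases ht i with ⟨c, h⟩ | ⟨c, e, h⟩ | ⟨c, h⟩ | ⟨c, h⟩ | h
  · rw [h]; exact Set.finite_singleton c
  · by_cases hce : c < e
    · exact absurd (h ▸ hts i) (hno c e hce)
    · rw [h, Set.Ioo_eq_empty hce]
      exact Set.finite_empty
  · exact absurd (Set.Ioo_subset_Iio_self.trans (h ▸ hts i))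
      (hno (c - 1) c (sub_lt_self c hM.one_pos))
  · exact absurd (Set.Ioo_subset_Ioi_self.trans (h ▸ hts i))
      (hno c (c + 1) (lt_add_of_pos_right c hM.one_pos))
  · exact absurd ((Set.subset_univ (Set.Ioo (0 : M) 1)).trans (h ▸ hts i))
      (hno 0 1 hM.one_pos)

end OrderFacts
section PropHelpers

variable {L' : FirstOrder.Language.{u, v}} {N : Type w} [L'.Structure N] {C : Set N}
  {γ : Type*}

lemma dand {A B : (γ → N) → Prop} (hA : C.Definable L' {w | A w})
    (hB : C.Definable L' {w | B w}) : C.Definable L' {w | A w ∧ B w} := hA.inter hB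

lemma dor {A B : (γ → N) → Prop} (hA : C.Definable L' {w | A w})
    (hB : C.Definable L' {w | B w}) : C.Definable L' {w | A w ∨ B w} := hA.union hB

lemma dnot {A : (γ → N) → Prop} (hA : C.Definable L' {w | A w}) :
    C.Definable L' {w | ¬ A w} := hA.compl

lemma dimp {A B : (γ → N) → Prop} (hA : C.Definable L' {w | A w})
    (hB : C.Definable L' {w | B w}) : C.Definable L' {w | A w → B w} := by
  have h := dor (dnot hA) hB
  convert h using 1
  ext w
  simp only [Set.mem_setOf_eq]
  tauto

end PropHelpers

section LeHelper

variable {L : FirstOrder.Language.{u, v}} {M : Type w} [L.Structure M]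
  [AddCommGroup M] [LinearOrder M] [IsOrderedAddMonoid M] [One M]

lemma dle (hM : OMinOrderedGroup L M) {γ : Type*} (a b : γ) :
    (∅ : Set M).Definable L {x : γ → M | x a ≤ x b} := by
  convert (dlt hM b a).compl using 1
  ext x
  simp [Set.mem_setOf_eq, not_lt]

end LeHelper

section Cset

variable {α : Type*} [LinearOrder α]

/-- The set whose unique element is the `j`-th smallest element of `R` (empty if none). -/
def cset (R : Set α) : ℕ → Set α := fun j =>
  Nat.rec {t | t ∈ R ∧ ∀ s, s ∈ R → t ≤ s}
    (fun _ prev => {t | t ∈ R ∧ ∃ w, w ∈ prev ∧ w < t ∧ ∀ v, v ∈ R → w < v → t ≤ v}) j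

lemma cset_subset (R : Set α) (j : ℕ) : cset R j ⊆ R := by
  cases j <;> exact fun t ht => ht.1

lemma cset_subsingleton (R : Set α) (j : ℕ) :
    ∀ t ∈ cset R j, ∀ t' ∈ cset R j, t = t' := by
  induction j with
  | zero =>
    intro t ht t' ht'
    exact le_antisymm (ht.2 t' ht'.1) (ht'.2 t ht.1)
  | succ j ih =>
    rintro t ⟨htR, w, hw, hwt, hmin⟩ t' ⟨htR', w', hw', hwt', hmin'⟩
    have hww : w = w' := ih w hw w' hw'
    subst hww
    exact le_antisymm (hmin t' htR' hwt') (hmin' t htR hwt)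

lemma cset_rank {R : Set α} (hR : R.Finite) :
    ∀ t ∈ R, t ∈ cset R ((R ∩ Set.Iio t).ncard) := by
  suffices H : ∀ m, ∀ t ∈ R, (R ∩ Set.Iio t).ncard = m → t ∈ cset R m by
    intro t ht
    exact H _ t ht rfl
  intro m
  induction m using Nat.strong_induction_on with
  | _ m ih =>
    intro t ht hm
    have hfin : (R ∩ Set.Iio t).Finite := hR.inter_of_left _
    match m, hm with
    | 0, hm =>
      refine ⟨ht, fun s hs => ?_⟩
      by_contra hst
      have hsm : s ∈ R ∩ Set.Iio t := ⟨hs, not_le.1 hst⟩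
      have : (R ∩ Set.Iio t) = ∅ := (Set.ncard_eq_zero hfin).1 hm
      rw [this] at hsm
      exact hsm
    | (m' + 1), hm =>
      have hne : (R ∩ Set.Iio t).Nonempty := by
        rw [← Set.ncard_pos hfin, hm]
        exact Nat.succ_pos m'
      have hne' : hfin.toFinset.Nonempty := by
        rwa [Set.Finite.toFinset_nonempty]
      set w := hfin.toFinset.max' hne' with hw_def
      have hw : w ∈ R ∩ Set.Iio t := by
        have := hfin.toFinset.max'_mem hne'
        rwa [Set.Finite.mem_toFinset] at this
      have hmax : ∀ v ∈ R ∩ Set.Iio t, v ≤ w := by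
        intro v hv
        exact hfin.toFinset.le_max' v (by rwa [Set.Finite.mem_toFinset])
      have hdiff : R ∩ Set.Iio w = (R ∩ Set.Iio t) \ {w} := by
        ext v
        constructor
        · rintro ⟨hvR, hvw⟩
          exact ⟨⟨hvR, hvw.trans hw.2⟩, fun h => absurd (h ▸ hvw) (lt_irrefl w)⟩
        · rintro ⟨⟨hvR, hvt⟩, hvne⟩
          exact ⟨hvR, lt_of_le_of_ne (hmax v ⟨hvR, hvt⟩) (by simpa using hvne)⟩
      have hcard : (R ∩ Set.Iio w).ncard = m' := by
        rw [hdiff, Set.ncard_diff_singleton_of_mem hw, hm]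
        omega
      have hwc : w ∈ cset R m' := ih m' (Nat.lt_succ_self m') w hw.1 hcard
      refine ⟨ht, w, hwc, hw.2, fun v hv hwv => ?_⟩
      by_contra hvt
      exact absurd hwv (not_lt.2 (hmax v ⟨hv, not_le.1 hvt⟩))

lemma cset_nonempty {R : Set α} (hR : R.Finite) :
    ∀ j < R.ncard, (cset R j).Nonempty := by
  intro j hj
  have hinj : Set.InjOn (fun t => (R ∩ Set.Iio t).ncard) R := by
    intro t ht t' ht' heq
    simp only at heq
    exact cset_subsingleton R ((R ∩ Set.Iio t').ncard) t (heq ▸ cset_rank hR t ht) t'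
      (cset_rank hR t' ht')
  have himg : ((fun t => (R ∩ Set.Iio t).ncard) '' R).ncard = R.ncard :=
    Set.ncard_image_of_injOn hinj
  have hsub : (fun t => (R ∩ Set.Iio t).ncard) '' R ⊆ Set.Iio R.ncard := by
    rintro _ ⟨t, ht, rfl⟩
    have : R ∩ Set.Iio t ⊂ R := by
      constructor
      · exact Set.inter_subset_left
      · intro hcon
        have := hcon ht
        exact absurd this.2 (lt_irrefl t)
    exact Set.ncard_lt_ncard this hR
  have hIio : (Set.Iio R.ncard).ncard = R.ncard := by
    rw [← Finset.coe_range, Set.ncard_coe_finset, Finset.card_range]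
  have heq : (fun t => (R ∩ Set.Iio t).ncard) '' R = Set.Iio R.ncard := by
    apply Set.eq_of_subset_of_ncard_le hsub
    rw [himg, hIio]
  have : j ∈ (fun t => (R ∩ Set.Iio t).ncard) '' R := by
    rw [heq]
    exact hj
  obtain ⟨t, ht, hrkt⟩ := this
  exact ⟨t, hrkt ▸ cset_rank hR t ht⟩

end Cset

section CsetDef

variable {L : FirstOrder.Language.{u, v}} {M : Type w} [L.Structure M]
  [AddCommGroup M] [LinearOrder M] [IsOrderedAddMonoid M] [One M]

lemma cset_definable (hM : OMinOrderedGroup L M) {R : Set M}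
    (hRdef : (∅ : Set M).Definable L {x : Fin 1 → M | x 0 ∈ R}) :
    ∀ j, (∅ : Set M).Definable L {x : Fin 1 → M | x 0 ∈ cset R j} := by
  intro j
  induction j with
  | zero =>
    have h1 : (∅ : Set M).Definable L {w : (Fin 1 ⊕ Fin 1) → M |
        w (Sum.inr 0) ∈ R → w (Sum.inl 0) ≤ w (Sum.inr 0)} :=
      dimp (dmem1 hRdef (Sum.inr 0)) (dle hM (Sum.inl 0) (Sum.inr 0))
    exact dand hRdef (dforall h1)
  | succ j ih =>
    have h3 : (∅ : Set M).Definable L {u : ((Fin 1 ⊕ Fin 1) ⊕ Fin 1) → M |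
        u (Sum.inr 0) ∈ R → (u (Sum.inl (Sum.inr 0)) < u (Sum.inr 0) →
          u (Sum.inl (Sum.inl 0)) ≤ u (Sum.inr 0))} :=
      dimp (dmem1 hRdef (Sum.inr 0)) (dimp (dlt hM (Sum.inl (Sum.inr 0)) (Sum.inr 0))
        (dle hM (Sum.inl (Sum.inl 0)) (Sum.inr 0)))
    have h5 : (∅ : Set M).Definable L {w : (Fin 1 ⊕ Fin 1) → M |
        w (Sum.inr 0) ∈ cset R j ∧ (w (Sum.inr 0) < w (Sum.inl 0) ∧
          ∀ y : M, Sum.elim w (fun _ => y) ∈ {u : ((Fin 1 ⊕ Fin 1) ⊕ Fin 1) → M |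
            u (Sum.inr 0) ∈ R → (u (Sum.inl (Sum.inr 0)) < u (Sum.inr 0) →
              u (Sum.inl (Sum.inl 0)) ≤ u (Sum.inr 0))})} :=
      dand (dmem1 ih (Sum.inr 0)) (dand (dlt hM (Sum.inr 0) (Sum.inl 0)) (dforall h3))
    exact dand hRdef (dexists h5)

end CsetDef
section ClP

variable {L : FirstOrder.Language.{u, v}} {M : Type w} [L.Structure M]
  [AddCommGroup M] [LinearOrder M] [IsOrderedAddMonoid M] [One M]

/-- Order-theoretic description of the closure of `P`. -/
def clMem (P : Set M) : Set M :=
  {t : M | ∀ a b : M, a < t → t < b → ∃ p ∈ P, a < p ∧ p < b}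

lemma subset_clMem (P : Set M) : P ⊆ clMem P :=
  fun p hp a b ha hb => ⟨p, hp, ha, hb⟩

lemma pairdef_P (P : Set M) : PairDef L M P ∅ {x : Fin 1 → M | x 0 ∈ P} := by
  letI := pairStructure L M P
  show (∅ : Set M).Definable (Lpair L) {x : Fin 1 → M | x 0 ∈ P}
  rw [Set.empty_definable_iff]
  refine ⟨Relations.formula (Sum.inr (Unit.unit) : (Lpair L).Relations 1)
    (fun _ => Term.var 0), ?_⟩
  ext x
  exact Iff.rfl

lemma ordClosure_P_eq (hM : OMinOrderedGroup L M) (P : Set M) :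
    ordClosure M {x : Fin 1 → M | x 0 ∈ P} = {x : Fin 1 → M | x 0 ∈ clMem P} := by
  classical
  unfold ordClosure
  letI : TopologicalSpace M := Preorder.topology M
  haveI : OrderTopology M := ⟨rfl⟩
  haveI : NoMaxOrder M := ⟨fun a => ⟨a + 1, lt_add_of_pos_right a hM.one_pos⟩⟩
  haveI : NoMinOrder M := ⟨fun a => ⟨a - 1, sub_lt_self a hM.one_pos⟩⟩
  have h1 : {x : Fin 1 → M | x 0 ∈ P} = (Homeomorph.funUnique (Fin 1) M) ⁻¹' P := by
    ext x
    exact Iff.rfl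
  rw [h1, ← Homeomorph.preimage_closure]
  ext x
  show x 0 ∈ closure P ↔ x 0 ∈ clMem P
  constructor
  · intro h a b ha hb
    obtain ⟨p, hp1, hp2⟩ := (mem_closure_iff.1 h) (Set.Ioo a b) isOpen_Ioo ⟨ha, hb⟩
    exact ⟨p, hp2, hp1.1, hp1.2⟩
  · intro h
    rw [mem_closure_iff]
    intro o ho hxo
    obtain ⟨l, u, hx, hsub⟩ := mem_nhds_iff_exists_Ioo_subset.1 (ho.mem_nhds hxo)
    obtain ⟨p, hp, hlp, hpu⟩ := h l u hx.1 hx.2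
    exact ⟨p, hsub ⟨hlp, hpu⟩, hp⟩

lemma clP_definable (hM : OMinOrderedGroup L M) {P : Set M} (hOP : OP L M P) :
    (∅ : Set M).Definable L {x : Fin 1 → M | x 0 ∈ clMem P} := by
  have hindep : DclIndepOver L M P (∅ \ P) := by
    intro d hd
    exact absurd hd.1 (Set.notMem_empty d)
  have h := hOP ∅ hindep 1 {x : Fin 1 → M | x 0 ∈ P} (pairdef_P P)
  rwa [ordClosure_P_eq hM P] at h

/-- Points of `clMem P` with an interval neighborhood inside `clMem P`. -/
def intCl (P : Set M) : Set M :=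
  {t : M | ∃ a, a < t ∧ ∃ b, t < b ∧ ∀ s, a < s → s < b → s ∈ clMem P}

lemma intCl_definable (hM : OMinOrderedGroup L M) {P : Set M} (hOP : OP L M P) :
    (∅ : Set M).Definable L {x : Fin 1 → M | x 0 ∈ intCl P} := by
  have hcl := clP_definable hM hOP
  -- innermost: context ((Fin 1 ⊕ Fin 1) ⊕ Fin 1) ⊕ Fin 1 : (t, a, b, s)
  have h1 : (∅ : Set M).Definable L {u : (((Fin 1 ⊕ Fin 1) ⊕ Fin 1) ⊕ Fin 1) → M |
      u (Sum.inl (Sum.inl (Sum.inr 0))) < u (Sum.inr 0) →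
        (u (Sum.inr 0) < u (Sum.inl (Sum.inr 0)) → u (Sum.inr 0) ∈ clMem P)} :=
    dimp (dlt hM _ _) (dimp (dlt hM _ _) (dmem1 hcl _))
  have h2 : (∅ : Set M).Definable L {w : ((Fin 1 ⊕ Fin 1) ⊕ Fin 1) → M |
      w (Sum.inl (Sum.inl 0)) < w (Sum.inr 0) ∧
        ∀ y : M, Sum.elim w (fun _ => y) ∈ {u : (((Fin 1 ⊕ Fin 1) ⊕ Fin 1) ⊕ Fin 1) → M |
          u (Sum.inl (Sum.inl (Sum.inr 0))) < u (Sum.inr 0) →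
            (u (Sum.inr 0) < u (Sum.inl (Sum.inr 0)) → u (Sum.inr 0) ∈ clMem P)}} :=
    dand (dlt hM _ _) (dforall h1)
  have h3 : (∅ : Set M).Definable L {v : (Fin 1 ⊕ Fin 1) → M |
      v (Sum.inr 0) < v (Sum.inl 0) ∧
        ∃ y : M, Sum.elim v (fun _ => y) ∈ {w : ((Fin 1 ⊕ Fin 1) ⊕ Fin 1) → M |
          w (Sum.inl (Sum.inl 0)) < w (Sum.inr 0) ∧
            ∀ y' : M, Sum.elim w (fun _ => y') ∈ _}} :=
    dand (dlt hM _ _) (dexists h2)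
  exact dexists h3

end ClP
section IndSide

variable {L : FirstOrder.Language.{u, v}} {M : Type w} [L.Structure M] {P D : Set M}

lemma ind_trace {m : ℕ} {s : Set (Fin m → M)} (hs : (∅ : Set M).Definable L s)
    {γ : Type*} (g : Fin m → γ) (A : Set ↥P) :
    IndDef L M P D A {q : γ → ↥P | (fun i => (q (g i) : M)) ∈ s} := by
  letI := indStructure L M P D
  show A.Definable (indLang L M D) {q : γ → ↥P | (fun i => (q (g i) : M)) ∈ s}
  obtain ⟨ψ, hψ⟩ := Set.empty_definable_iff.1 hs
  refine Set.Definable.mono ?_ (Set.empty_subset A)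
  rw [Set.empty_definable_iff]
  refine ⟨Relations.formula (n := m)
    (((L.lhomWithConstants D).onFormula ψ : (L[[D]]).Formula (Fin m)) :
      (indLang L M D).Relations m) (fun i => Term.var (g i)), ?_⟩
  ext q
  have hRel : Structure.RelMap (L := indLang L M D) (M := ↥P)
      (((L.lhomWithConstants D).onFormula ψ : (L[[D]]).Formula (Fin m)) :
        (indLang L M D).Relations m) (fun i => q (g i)) ↔
      ψ.Realize (fun i => ((q (g i) : M))) := by
    show Formula.Realize (M := M) ((L.lhomWithConstants D).onFormula ψ)
      (fun i => ((q (g i) : M))) ↔ _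
    exact LHom.realize_onFormula _ _
  have hrr := Formula.realize_rel (M := ↥P) (L := indLang L M D)
    (R := (((L.lhomWithConstants D).onFormula ψ : (L[[D]]).Formula (Fin m)) :
      (indLang L M D).Relations m)) (ts := fun i => Term.var (g i)) (v := q)
  constructor
  · intro hmem
    show Formula.Realize _ q
    refine hrr.mpr ?_
    refine hRel.mpr ?_
    have := hψ ▸ hmem
    exact this
  · intro hmem
    have h2 := hRel.mp (hrr.mp hmem)
    show (fun i => ((q (g i) : M))) ∈ s
    rw [hψ]
    exact h2

lemma hind_transport (hind : IndD L M P D) (A : Set ↥P) {m : ℕ} {γ : Type*} (e : γ ≃ Fin m)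
    {X : Set (γ → ↥P)}
    (hX : IndDef L M P D A X) :
    ∃ Y : Set (γ → M), ((Subtype.val '' A ∪ D).Definable L Y) ∧
      ∀ q : γ → ↥P, q ∈ X ↔ (fun i => (q i : M)) ∈ Y := by
  letI := indStructure L M P D
  have hX0 : A.Definable (indLang L M D) X := hX
  have hX' := hX0.image_comp_equiv e.symm
  obtain ⟨Y', hY'def, hY'eq⟩ := hind A m _ hX'
  refine ⟨{p : γ → M | (fun i => p (e.symm i)) ∈ Y'}, dpull hY'def _, ?_⟩
  intro q
  have h1 : q ∈ X ↔ (fun g : γ → ↥P => g ∘ e.symm) q ∈ ((fun g => g ∘ e.symm) '' X) := by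
    constructor
    · exact fun h => ⟨q, h, rfl⟩
    · rintro ⟨g, hg, hge⟩
      have hgq : g = q := by
        funext j
        have := congrFun hge (e j)
        simpa using this
      rwa [← hgq]
  rw [h1, hY'eq]
  exact Iff.rfl

end IndSide
section Core

variable {L : FirstOrder.Language.{u, v}} {M : Type w} [L.Structure M]
  [AddCommGroup M] [LinearOrder M] [IsOrderedAddMonoid M] [One M]

/-- `(u, s)` is in `Z` (fiber membership for the epigraph trace). -/
def inZpred {n : ℕ} (Z : Set ((Fin n ⊕ Fin 1) → M)) (u : Fin n → M) (s : M) : Prop :=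
  Sum.elim u (fun _ : Fin 1 => s) ∈ Z

/-- The first-order characterization of `f x` at interior points of `cl P`. -/
def CHARpred {n : ℕ} (P : Set M) (Z : Set ((Fin n ⊕ Fin 1) → M)) (u : Fin n → M)
    (t : M) : Prop :=
  t ∈ intCl P ∧
  ((∃ e : M, t < e ∧ ∀ s : M, t < s → s < e → inZpred Z u s) ∧
  (∃ d : M, d < t ∧ ((∀ s : M, d < s → s < t → s ∈ clMem P) ∧
    ∀ c : M, ∀ e' : M, d ≤ c → c < e' → e' ≤ t →
      ∃ w' : M, c < w' ∧ (w' < e' ∧ ¬ inZpred Z u w'))))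

/-- The defining predicate of the extending function. -/
def GOODpred {n : ℕ} (P : Set M) (Z : Set ((Fin n ⊕ Fin 1) → M))
    (U : ℕ → Set (Fin n → M)) (N : ℕ) (cs : ℕ → Set M) (u : Fin n → M) (t : M) : Prop :=
  (∃ j, j < N ∧ u ∈ U j ∧ (∀ i, i < j → u ∉ U i) ∧ t ∈ cs j) ∨
  (((∀ j, j < N → u ∉ U j) ∧ ((∃! s, CHARpred P Z u s) ∧ CHARpred P Z u t)) ∨
  ((∀ j, j < N → u ∉ U j) ∧ (¬ (∃! s, CHARpred P Z u s) ∧ t + t = t)))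

theorem core1 (hM : OMinOrderedGroup L M) {P D : Set M} (hOP : OP L M P)
    (hind : IndD L M P D) {n : ℕ} (A : Set ↥P) (f1 : (Fin n → ↥P) → (Fin 1 → ↥P))
    (hf1 : IndDef L M P D A {q : (Fin n ⊕ Fin 1) → ↥P |
      (fun i => q (Sum.inr i)) = f1 (fun j => q (Sum.inl j))}) :
    ∃ F1 : (Fin n → M) → (Fin 1 → M),
      ((Subtype.val '' A ∪ D).Definable L {p : (Fin n ⊕ Fin 1) → M |
        (fun i => p (Sum.inr i)) = F1 (fun j => p (Sum.inl j))}) ∧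
      ∀ x : Fin n → ↥P, F1 (fun j => (x j : M)) = fun i => (f1 x i : M) := by
  classical
  letI := indStructure L M P D
  set B : Set M := Subtype.val '' A ∪ D with hB_def
  have hdense := dense_M hM
  haveI : DenselyOrdered M := ⟨hdense⟩
  have hcldef := clP_definable hM hOP
  have hintdef := intCl_definable hM hOP
  have hPsub : P ⊆ clMem P := subset_clMem P
  have hopen : ∀ a b : M, a < b → Set.Ioo a b ⊆ clMem P → ∃ p ∈ P, a < p ∧ p < b := by
    intro a b hab hsub
    obtain ⟨c, hc1, hc2⟩ := hdense a b hab
    exact (hsub ⟨hc1, hc2⟩) a b hc1 hc2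
  set R : Set M := clMem P \ intCl P with hR_def
  have hRdef : (∅ : Set M).Definable L {x : Fin 1 → M | x 0 ∈ R} := hcldef.sdiff hintdef
  have hRfin : R.Finite := by
    apply finite_of_noIoo hM (hRdef.mono (Set.subset_univ _))
    intro a b hab hsub
    obtain ⟨c, hc1, hc2⟩ := hdense a b hab
    have hc := hsub ⟨hc1, hc2⟩
    exact hc.2 ⟨a, hc1, b, hc2, fun s hs1 hs2 => (hsub ⟨hs1, hs2⟩).1⟩
  set N := R.ncard with hN_def
  have hΓ : A.Definable (indLang L M D) {q : (Fin n ⊕ Fin 1) → ↥P |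
    (fun i => q (Sum.inr i)) = f1 (fun j => q (Sum.inl j))} := hf1
  -- the epigraph trace
  set gΓ : (Fin n ⊕ Fin 1) → ((Fin n ⊕ Fin 1) ⊕ Fin 1) :=
    Sum.elim (fun j => Sum.inl (Sum.inl j)) (fun _ => Sum.inr 0) with hgΓ_def
  have hSZdef : A.Definable (indLang L M D) {q : (Fin n ⊕ Fin 1) → ↥P |
      ∃ y : ↥P, Sum.elim q (fun _ => y) ∈
        {w : ((Fin n ⊕ Fin 1) ⊕ Fin 1) → ↥P |
          (fun i => w (gΓ i)) ∈ {q' : (Fin n ⊕ Fin 1) → ↥P |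
            (fun i => q' (Sum.inr i)) = f1 (fun j => q' (Sum.inl j))} ∧
          ((w (Sum.inr 0) : M) < (w (Sum.inl (Sum.inr 0)) : M))}} := by
    refine dexists (dand (dpull hΓ gΓ) ?_)
    exact ind_trace hM.lt_def (![Sum.inr 0, Sum.inl (Sum.inr 0)]) A
  obtain ⟨Z, hZdef, hZtr⟩ := hind_transport hind A (finSumFinEquiv (m := n) (n := 1)) hSZdef
  -- trace semantics of Z
  have hZ : ∀ (x : Fin n → ↥P) (z : ↥P),
      inZpred Z (fun j => (x j : M)) (z : M) ↔ ((f1 x 0 : M) < (z : M)) := by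
    intro x z
    have h1 := hZtr (Sum.elim x (fun _ => z))
    have hcomm : (fun i => ((Sum.elim x (fun _ : Fin 1 => z) : (Fin n ⊕ Fin 1) → ↥P) i : M)) =
        Sum.elim (fun j => (x j : M)) (fun _ : Fin 1 => (z : M)) := by
      funext i
      rcases i with j | j <;> rfl
    rw [hcomm] at h1
    constructor
    · intro hm
      obtain ⟨y, hy1, hy2⟩ := h1.mpr hm
      have hyx : y = f1 x 0 := congrFun hy1 0
      have hy2' : (y : M) < (z : M) := hy2
      exact hyx ▸ hy2'
    · intro hlt
      apply h1.mp
      refine ⟨f1 x 0, ?_, ?_⟩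
      · show (fun _ : Fin 1 => f1 x 0) = f1 x
        funext i
        rw [Fin.eq_zero i]
      · exact hlt
  -- pieces for values in R
  have hcsetdef := cset_definable hM hRdef
  have hS'def : ∀ j : ℕ, A.Definable (indLang L M D) {x : Fin n → ↥P |
      ∃ y : ↥P, Sum.elim x (fun _ => y) ∈
        {w : (Fin n ⊕ Fin 1) → ↥P |
          w ∈ {q' : (Fin n ⊕ Fin 1) → ↥P |
            (fun i => q' (Sum.inr i)) = f1 (fun j => q' (Sum.inl j))} ∧
          ((w (Sum.inr 0) : M)) ∈ cset R j}} := by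
    intro j
    refine dexists (dand hΓ ?_)
    exact ind_trace (hcsetdef j) (![Sum.inr 0]) A
  have hUex : ∀ j : ℕ, ∃ Y : Set ((Fin n → M)), (B.Definable L Y) ∧
      ∀ q : Fin n → ↥P, (q ∈ {x : Fin n → ↥P |
      ∃ y : ↥P, Sum.elim x (fun _ => y) ∈
        {w : (Fin n ⊕ Fin 1) → ↥P |
          w ∈ {q' : (Fin n ⊕ Fin 1) → ↥P |
            (fun i => q' (Sum.inr i)) = f1 (fun j => q' (Sum.inl j))} ∧
          ((w (Sum.inr 0) : M)) ∈ cset R j}}) ↔ (fun i => (q i : M)) ∈ Y :=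
    fun j => hind_transport hind A (Equiv.refl (Fin n)) (hS'def j)
  choose U hUdef hUtr using hUex
  have hUmem : ∀ (j : ℕ) (x : Fin n → ↥P),
      ((fun i => (x i : M)) ∈ U j) ↔ ((f1 x 0 : M) ∈ cset R j) := by
    intro j x
    rw [← hUtr j x]
    constructor
    · rintro ⟨y, hy1, hy2⟩
      have hyx : y = f1 x 0 := congrFun hy1 0
      have hy2' : (y : M) ∈ cset R j := hy2
      exact hyx ▸ hy2'
    · intro hc
      refine ⟨f1 x 0, ?_, ?_⟩
      · show (fun _ : Fin 1 => f1 x 0) = f1 x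
        funext i
        rw [Fin.eq_zero i]
      · exact hc
  -- definability of the Z-atom in extended contexts
  have hinZ : ∀ {γ' : Type} (a : Fin n → γ') (c : γ'),
      B.Definable L {w : γ' → M | inZpred Z (fun j => w (a j)) (w c)} := by
    intro γ' a c
    have h := dpull hZdef (Sum.elim a (fun _ : Fin 1 => c))
    convert h using 1
    ext w
    simp only [Set.mem_setOf_eq]
    have he : (fun i => w (Sum.elim a (fun _ : Fin 1 => c) i)) =
        Sum.elim (fun j => w (a j)) (fun _ : Fin 1 => w c) := by
      funext i
      rcases i with j | j <;> rfl
    rw [inZpred, ← he]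
  -- totality of GOODpred
  have hcnon := cset_nonempty hRfin
  have hcsing := cset_subsingleton R
  have htotal : ∀ u : Fin n → M, ∃! t : M, GOODpred P Z U N (cset R) u t := by
    intro u
    by_cases hJ : ∃ j, j < N ∧ u ∈ U j
    · have hj₀ := Nat.find_spec hJ
      have hmin' : ∀ i, i < Nat.find hJ → u ∉ U i := by
        intro i hi hui
        exact Nat.find_min hJ hi ⟨hi.trans hj₀.1, hui⟩
      obtain ⟨t₀, ht₀⟩ := hcnon (Nat.find hJ) hj₀.1
      refine ⟨t₀, Or.inl ⟨Nat.find hJ, hj₀.1, hj₀.2, hmin', ht₀⟩, ?_⟩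
      intro t' ht'
      rcases ht' with ⟨j', hj'N, hj'U, hj'min, hj'c⟩ | ⟨hall, _⟩ | ⟨hall, _⟩
      · have hjj : j' = Nat.find hJ := by
          by_contra hne
          rcases lt_or_gt_of_ne hne with h | h
          · exact Nat.find_min hJ h ⟨hj'N, hj'U⟩
          · exact hj'min (Nat.find hJ) h hj₀.2
        rw [hjj] at hj'c
        exact hcsing (Nat.find hJ) t' hj'c t₀ ht₀
      · exact absurd hj₀.2 (hall (Nat.find hJ) hj₀.1)
      · exact absurd hj₀.2 (hall (Nat.find hJ) hj₀.1)
    · push_neg at hJ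
      by_cases hC : ∃! s, CHARpred P Z u s
      · obtain ⟨s₀, hs₀, huniq⟩ := hC
        refine ⟨s₀, Or.inr (Or.inl ⟨hJ, ⟨s₀, hs₀, huniq⟩, hs₀⟩), ?_⟩
        intro t' ht'
        rcases ht' with ⟨j', hj'N, hj'U, _⟩ | ⟨_, _, hch⟩ | ⟨_, hnc, _⟩
        · exact absurd hj'U (hJ j' hj'N)
        · exact huniq t' hch
        · exact absurd ⟨s₀, hs₀, huniq⟩ hnc
      · refine ⟨0, Or.inr (Or.inr ⟨hJ, hC, by rw [add_zero]⟩), ?_⟩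
        intro t' ht'
        rcases ht' with ⟨j', hj'N, hj'U, _⟩ | ⟨_, hch, _⟩ | ⟨_, _, hz⟩
        · exact absurd hj'U (hJ j' hj'N)
        · exact absurd hch hC
        · have h2 : t' + t' = t' + 0 := by rw [add_zero]; exact hz
          exact add_left_cancel h2
  -- the extending function
  set F1 : (Fin n → M) → (Fin 1 → M) := fun u _ => (htotal u).exists.choose with hF1_def
  have hF1good : ∀ u, GOODpred P Z U N (cset R) u (F1 u 0) :=
    fun u => (htotal u).exists.choose_spec
  have hF1uniq : ∀ u t, GOODpred P Z U N (cset R) u t → F1 u 0 = t :=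
    fun u t h => ((htotal u).unique (hF1good u) h)
  have hgraph : {p : (Fin n ⊕ Fin 1) → M |
      (fun i => p (Sum.inr i)) = F1 (fun j => p (Sum.inl j))} =
      {p : (Fin n ⊕ Fin 1) → M |
        GOODpred P Z U N (cset R) (fun j => p (Sum.inl j)) (p (Sum.inr 0))} := by
    ext p
    simp only [Set.mem_setOf_eq]
    constructor
    · intro h
      have h0 := (congrFun h 0).symm
      rw [← h0]
      exact hF1good _
    · intro h
      funext i
      rw [Fin.eq_zero i]
      exact (hF1uniq _ _ h).symm
  -- definability of the GOOD set
  have hBlt : ∀ {γ' : Type} (a b : γ'), B.Definable L {x : γ' → M | x a < x b} :=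
    fun a b => (dlt hM a b).mono (Set.empty_subset B)
  have hBle : ∀ {γ' : Type} (a b : γ'), B.Definable L {x : γ' → M | x a ≤ x b} :=
    fun a b => (dle hM a b).mono (Set.empty_subset B)
  have hCH : ∀ {γ' : Type} (a : Fin n → γ') (c : γ'),
      B.Definable L {w : γ' → M | CHARpred P Z (fun j => w (a j)) (w c)} := by
    intro γ' a c
    have h2a := dimp (hBlt (γ' := (γ' ⊕ Fin 1) ⊕ Fin 1) (Sum.inl (Sum.inl c)) (Sum.inr 0))
      (dimp (hBlt (Sum.inr 0) (Sum.inl (Sum.inr 0)))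
        (hinZ (fun j => Sum.inl (Sum.inl (a j))) (Sum.inr 0)))
    have h2 := dexists (dand (hBlt (γ' := γ' ⊕ Fin 1) (Sum.inl c) (Sum.inr 0)) (dforall h2a))
    have h3L := dimp (hBlt (γ' := (γ' ⊕ Fin 1) ⊕ Fin 1) (Sum.inl (Sum.inr 0)) (Sum.inr 0))
      (dimp (hBlt (Sum.inr 0) (Sum.inl (Sum.inl c)))
        (dmem1 (hcldef.mono (Set.empty_subset B)) (Sum.inr 0)))
    have h3c := dand (hBlt (γ' := (((γ' ⊕ Fin 1) ⊕ Fin 1) ⊕ Fin 1) ⊕ Fin 1)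
        (Sum.inl (Sum.inl (Sum.inr 0))) (Sum.inr 0))
      (dand (hBlt (Sum.inr 0) (Sum.inl (Sum.inr 0)))
        (dnot (hinZ (fun j => Sum.inl (Sum.inl (Sum.inl (Sum.inl (a j))))) (Sum.inr 0))))
    have h3b := dimp (hBle (γ' := ((γ' ⊕ Fin 1) ⊕ Fin 1) ⊕ Fin 1)
        (Sum.inl (Sum.inl (Sum.inr 0))) (Sum.inl (Sum.inr 0)))
      (dimp (hBlt (Sum.inl (Sum.inr 0)) (Sum.inr 0))
        (dimp (hBle (Sum.inr 0) (Sum.inl (Sum.inl (Sum.inl c)))) (dexists h3c)))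
    have h3 := dexists (dand (hBlt (γ' := γ' ⊕ Fin 1) (Sum.inr 0) (Sum.inl c))
      (dand (dforall h3L) (dforall (dforall h3b))))
    exact dand (dmem1 (hintdef.mono (Set.empty_subset B)) c) (dand h2 h3)
  have hUNIQ : ∀ {γ' : Type} (a : Fin n → γ'),
      B.Definable L {w : γ' → M | ∃! s, CHARpred P Z (fun j => w (a j)) s} := by
    intro γ' a
    exact dexists (dand (hCH (fun j => Sum.inl (a j)) (Sum.inr 0))
      (dforall (dimp (hCH (fun j => Sum.inl (Sum.inl (a j))) (Sum.inr 0))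
        (deq (Sum.inr 0) (Sum.inl (Sum.inr 0))))))
  have hAll : ∀ m : ℕ, B.Definable L {p : (Fin n ⊕ Fin 1) → M |
      ∀ i, i < m → (fun j' => p (Sum.inl j')) ∉ U i} := by
    intro m
    induction m with
    | zero =>
      have huniv : {p : (Fin n ⊕ Fin 1) → M |
          ∀ i, i < 0 → (fun j' => p (Sum.inl j')) ∉ U i} = Set.univ := by
        ext p
        simp
      rw [huniv]
      exact Set.definable_univ
    | succ m ih =>
      have h2 := dand ih (dnot (dpull (hUdef m) Sum.inl))
      convert h2 using 1
      ext p
      simp only [Set.mem_setOf_eq]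
      constructor
      · intro h
        exact ⟨fun i hi => h i (hi.trans (Nat.lt_succ_self m)), h m (Nat.lt_succ_self m)⟩
      · rintro ⟨h1, h2⟩ i hi
        rcases Nat.lt_succ_iff_lt_or_eq.1 hi with h | h
        · exact h1 i h
        · rw [h]
          exact h2
  have hDj : ∀ j : ℕ, B.Definable L {p : (Fin n ⊕ Fin 1) → M |
      ((fun j' => p (Sum.inl j')) ∈ U j ∧ ((∀ i, i < j → (fun j' => p (Sum.inl j')) ∉ U i) ∧
        p (Sum.inr 0) ∈ cset R j))} :=
    fun j => dand (dpull (hUdef j) Sum.inl) (dand (hAll j)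
      (dmem1 ((hcsetdef j).mono (Set.empty_subset B)) (Sum.inr 0)))
  have hD1 : B.Definable L {p : (Fin n ⊕ Fin 1) → M |
      ∃ j, j < N ∧ ((fun j' => p (Sum.inl j')) ∈ U j ∧
        ((∀ i, i < j → (fun j' => p (Sum.inl j')) ∉ U i) ∧ p (Sum.inr 0) ∈ cset R j))} := by
    have hb := Set.definable_biUnion_finset (fun j => hDj j) (Finset.range N)
    convert hb using 1
    ext p
    simp only [Set.mem_setOf_eq, Set.mem_iUnion, Finset.mem_range, exists_prop]
  have hGOODdef : B.Definable L {p : (Fin n ⊕ Fin 1) → M |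
      GOODpred P Z U N (cset R) (fun j => p (Sum.inl j)) (p (Sum.inr 0))} := by
    have hCHα := hCH (γ' := Fin n ⊕ Fin 1) Sum.inl (Sum.inr 0)
    have hUNα := hUNIQ (γ' := Fin n ⊕ Fin 1) Sum.inl
    have hALLα := hAll N
    exact dor hD1 (dor (dand hALLα (dand hUNα hCHα))
      (dand hALLα (dand (dnot hUNα)
        ((dadd hM (Sum.inr 0 : Fin n ⊕ Fin 1) (Sum.inr 0) (Sum.inr 0)).mono
          (Set.empty_subset B)))))
  -- extension property
  -- finiteness of parametrized slices
  have hfinNZ : ∀ (x : Fin n → ↥P) (c d : M), ((f1 x 0 : M)) ≤ c →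
      (∀ s, c < s → s < d → s ∈ clMem P) →
      {s : M | c < s ∧ (s < d ∧ ¬ inZpred Z (fun j => ((x j : M))) s)}.Finite := by
    intro x c d hc hcl
    apply finite_of_noIoo hM
    · have hS : B.Definable L {v : ((Fin n ⊕ Fin 2) ⊕ Fin 1) → M |
          v (Sum.inl (Sum.inr 0)) < v (Sum.inr 0) ∧ (v (Sum.inr 0) < v (Sum.inl (Sum.inr 1)) ∧
            ¬ inZpred Z (fun j => v (Sum.inl (Sum.inl j))) (v (Sum.inr 0)))} :=
        dand ((dlt hM _ _).mono (Set.empty_subset B)) (dand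
          ((dlt hM _ _).mono (Set.empty_subset B))
          (dnot (hinZ (fun j => Sum.inl (Sum.inl j)) (Sum.inr 0))))
      exact dslice hS (Sum.elim (fun j => ((x j : M))) ![c, d])
    · intro c' d' hcd' hss
      have hsubcl : Set.Ioo c' d' ⊆ clMem P := by
        intro s hs
        have := hss hs
        exact hcl s this.1 this.2.1
      obtain ⟨p, hpP, hp1, hp2⟩ := hopen c' d' hcd' hsubcl
      have hmem := hss ⟨hp1, hp2⟩
      have hfxp : ((f1 x 0 : M)) < p := lt_of_le_of_lt hc hmem.1
      exact hmem.2.2 ((hZ x ⟨p, hpP⟩).mpr hfxp)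
  have hfinZ : ∀ (x : Fin n → ↥P) (c d : M), d ≤ ((f1 x 0 : M)) →
      (∀ s, c < s → s < d → s ∈ clMem P) →
      {s : M | c < s ∧ (s < d ∧ inZpred Z (fun j => ((x j : M))) s)}.Finite := by
    intro x c d hd hcl
    apply finite_of_noIoo hM
    · have hS : B.Definable L {v : ((Fin n ⊕ Fin 2) ⊕ Fin 1) → M |
          v (Sum.inl (Sum.inr 0)) < v (Sum.inr 0) ∧ (v (Sum.inr 0) < v (Sum.inl (Sum.inr 1)) ∧
            inZpred Z (fun j => v (Sum.inl (Sum.inl j))) (v (Sum.inr 0)))} :=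
        dand ((dlt hM _ _).mono (Set.empty_subset B)) (dand
          ((dlt hM _ _).mono (Set.empty_subset B))
          (hinZ (fun j => Sum.inl (Sum.inl j)) (Sum.inr 0)))
      exact dslice hS (Sum.elim (fun j => ((x j : M))) ![c, d])
    · intro c' d' hcd' hss
      have hsubcl : Set.Ioo c' d' ⊆ clMem P := by
        intro s hs
        have := hss hs
        exact hcl s this.1 this.2.1
      obtain ⟨p, hpP, hp1, hp2⟩ := hopen c' d' hcd' hsubcl
      have hmem := hss ⟨hp1, hp2⟩
      have hfxp := (hZ x ⟨p, hpP⟩).mp hmem.2.2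
      exact absurd hfxp (not_lt.2 (le_of_lt (lt_of_lt_of_le hmem.2.1 hd)))
  -- adjacent-interval and interior-point selection
  have hadj : ∀ (c d : M) (S : Set M), c < d →
      ({s : M | c < s ∧ (s < d ∧ s ∈ S)}).Finite →
      ∃ e, c < e ∧ (e ≤ d ∧ ∀ s, c < s → s < e → s ∉ S) := by
    intro c d S hcd hfin
    by_cases hne : ({s : M | c < s ∧ (s < d ∧ s ∈ S)}).Nonempty
    · have hne' := (Set.Finite.toFinset_nonempty hfin).2 hne
      have hm := hfin.toFinset.min'_mem hne'
      rw [Set.Finite.mem_toFinset] at hm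
      refine ⟨hfin.toFinset.min' hne', hm.1, hm.2.1.le, ?_⟩
      intro s hs1 hs2 hsS
      have hsm : s ∈ hfin.toFinset := by
        rw [Set.Finite.mem_toFinset]
        exact ⟨hs1, hs2.trans hm.2.1, hsS⟩
      exact absurd (hfin.toFinset.min'_le s hsm) (not_le.2 hs2)
    · refine ⟨d, hcd, le_refl d, fun s h1 h2 h3 => hne ⟨s, h1, h2, h3⟩⟩
  have hpt : ∀ (c d : M) (S : Set M), c < d →
      ({s : M | c < s ∧ (s < d ∧ s ∈ S)}).Finite →
      ∃ w', c < w' ∧ (w' < d ∧ w' ∉ S) := by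
    intro c d S hcd hfin
    have hI : (Set.Ioo c d).Infinite := Set.Ioo_infinite hcd
    obtain ⟨w', hw'⟩ := (hI.diff hfin).nonempty
    exact ⟨w', hw'.1.1, hw'.1.2, fun hS => hw'.2 ⟨hw'.1.1, hw'.1.2, hS⟩⟩
  have hext : ∀ x : Fin n → ↥P,
      GOODpred P Z U N (cset R) (fun j => ((x j : M))) ((f1 x 0 : M)) := by
    intro x
    have hfxP : ((f1 x 0 : M)) ∈ P := (f1 x 0).2
    have hfxcl : ((f1 x 0 : M)) ∈ clMem P := hPsub hfxP
    by_cases hfR : ((f1 x 0 : M)) ∈ R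
    · have hrk := cset_rank hRfin _ hfR
      have hmN : (R ∩ Set.Iio ((f1 x 0 : M))).ncard < N := by
        refine Set.ncard_lt_ncard ?_ hRfin
        constructor
        · exact Set.inter_subset_left
        · intro hcon
          exact absurd (hcon hfR).2 (lt_irrefl _)
      have hexj : ∃ j, ((f1 x 0 : M)) ∈ cset R j := ⟨_, hrk⟩
      refine Or.inl ⟨Nat.find hexj, ?_, ?_, ?_, Nat.find_spec hexj⟩
      · exact lt_of_le_of_lt (Nat.find_min' hexj hrk) hmN
      · exact (hUmem _ x).mpr (Nat.find_spec hexj)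
      · intro i hi hui
        exact Nat.find_min hexj hi ((hUmem i x).mp hui)
    · have hfI : ((f1 x 0 : M)) ∈ intCl P := by
        by_contra h
        exact hfR ⟨hfxcl, h⟩
      have hall : ∀ j, j < N → (fun j' => ((x j' : M))) ∉ U j :=
        fun j hj hu => hfR (cset_subset R j ((hUmem j x).mp hu))
      obtain ⟨a, ha, b, hb, hIcl⟩ := hfI
      have hchar_fx : CHARpred P Z (fun j => ((x j : M))) ((f1 x 0 : M)) := by
        refine ⟨⟨a, ha, b, hb, hIcl⟩, ?_, ?_⟩
        · have hf := hfinNZ x ((f1 x 0 : M)) b (le_refl _)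
            (fun s h1 h2 => hIcl s (ha.trans h1) h2)
          obtain ⟨e, he1, _, he3⟩ := hadj _ b _ hb hf
          exact ⟨e, he1, fun s h1 h2 => not_not.1 (he3 s h1 h2)⟩
        · refine ⟨a, ha, fun s h1 h2 => hIcl s h1 (h2.trans hb), ?_⟩
          intro c' e' hdc he' het
          have hfZ := hfinZ x c' e' het (fun s h1' h2' => hIcl s (lt_of_le_of_lt hdc h1')
            (lt_of_lt_of_le h2' (le_trans het hb.le)))
          exact hpt c' e' _ he' hfZ
      have hchar_uniq : ∀ t', CHARpred P Z (fun j => ((x j : M))) t' → t' = ((f1 x 0 : M)) := by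
        rintro t' ⟨hI', ⟨e, he, hre⟩, ⟨d, hd, hcl', hno⟩⟩
        rcases lt_trichotomy t' ((f1 x 0 : M)) with hlt | heq | hgt
        · obtain ⟨a', ha', b', hb', hIcl'⟩ := hI'
          have hm1 : t' < min e (min b' ((f1 x 0 : M))) := lt_min he (lt_min hb' hlt)
          obtain ⟨p, hpP, hp1, hp2⟩ := hopen t' _ hm1
            (fun s hs => hIcl' s (ha'.trans hs.1)
              (lt_of_lt_of_le hs.2 (le_trans (min_le_right _ _) (min_le_left _ _))))
          have hinzp : inZpred Z (fun j => ((x j : M))) p :=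
            hre p hp1 (lt_of_lt_of_le hp2 (min_le_left _ _))
          have hgtp := (hZ x ⟨p, hpP⟩).mp hinzp
          exact absurd hgtp (not_lt.2 (le_of_lt (lt_of_lt_of_le hp2
            (le_trans (min_le_right _ _) (min_le_right _ _)))))
        · exact heq
        · have hc0 : max d ((f1 x 0 : M)) < t' := max_lt hd hgt
          have hK := hfinNZ x (max d ((f1 x 0 : M))) t' (le_max_right _ _)
            (fun s h1 h2 => hcl' s (lt_of_le_of_lt (le_max_left _ _) h1) h2)
          obtain ⟨u₀, hu₀1, hu₀2⟩ := hdense _ t' hc0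
          have hK2 : {s : M | u₀ < s ∧ (s < t' ∧
              ¬ inZpred Z (fun j => ((x j : M))) s)}.Finite :=
            hK.subset (fun s hs => ⟨hu₀1.trans hs.1, hs.2⟩)
          obtain ⟨e₀, he₀1, he₀2, he₀3⟩ := hadj u₀ t' _ hu₀2 hK2
          obtain ⟨w', hw1, hw2, hw3⟩ := hno u₀ e₀
            (le_of_lt (lt_of_le_of_lt (le_max_left _ _) hu₀1)) he₀1 he₀2
          exact absurd hw3 (he₀3 w' hw1 hw2)
      exact Or.inr (Or.inl ⟨hall, ⟨((f1 x 0 : M)), hchar_fx, hchar_uniq⟩, hchar_fx⟩)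
  refine ⟨F1, ?_, ?_⟩
  · rw [hgraph]
    exact hGOODdef
  · intro x
    funext i
    rw [Fin.eq_zero i]
    exact hF1uniq _ _ (hext x)

end Core
/-- Under (OP) and (ind)_D, every `A`-definable map `f : P^n → P^k` in `P_ind(D)` extends to
an `L_{A∪D}`-definable map `F : M^n → M^k`. -/
theorem statement7 {L : FirstOrder.Language.{u, v}} {M : Type w} [L.Structure M]
    [AddCommGroup M] [LinearOrder M] [IsOrderedAddMonoid M] [One M] (hM : OMinOrderedGroup L M)
    {P D : Set M} (hOP : OP L M P) (hind : IndD L M P D)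
    {n k : ℕ} (A : Set ↥P) (f : (Fin n → ↥P) → (Fin k → ↥P))
    (hf : IndDef L M P D A {p : (Fin n ⊕ Fin k) → ↥P |
      (fun i => p (Sum.inr i)) = f (fun i => p (Sum.inl i))}) :
    ∃ F : (Fin n → M) → (Fin k → M),
      (Subtype.val '' A ∪ D).Definable L {p : (Fin n ⊕ Fin k) → M |
        (fun i => p (Sum.inr i)) = F (fun i => p (Sum.inl i))} ∧
      ∀ x : Fin n → ↥P, F (fun i => (x i : M)) = fun i => (f x i : M) := by
  classical
  letI := indStructure L M P D
  have hcore : ∀ i : Fin k, ∃ F1 : (Fin n → M) → (Fin 1 → M),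
      ((Subtype.val '' A ∪ D).Definable L {p : (Fin n ⊕ Fin 1) → M |
        (fun i' => p (Sum.inr i')) = F1 (fun j => p (Sum.inl j))}) ∧
      ∀ x : Fin n → ↥P, F1 (fun j => (x j : M)) =
        fun i' => (((fun x' (_ : Fin 1) => f x' i) : (Fin n → ↥P) → Fin 1 → ↥P) x i' : M) := by
    intro i
    apply core1 hM hOP hind A (fun x' (_ : Fin 1) => f x' i)
    have h0 : A.Definable (indLang L M D) {p : (Fin n ⊕ Fin k) → ↥P |
        (fun i' => p (Sum.inr i')) = f (fun j => p (Sum.inl j))} := hf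
    have h1 := h0.image_comp (Sum.map id (fun _ : Fin 1 => i))
    have himg : (fun g : (Fin n ⊕ Fin k) → ↥P =>
          g ∘ (Sum.map id (fun _ : Fin 1 => i))) ''
        {p : (Fin n ⊕ Fin k) → ↥P | (fun i' => p (Sum.inr i')) = f (fun j => p (Sum.inl j))} =
        {q : (Fin n ⊕ Fin 1) → ↥P | (fun i' => q (Sum.inr i')) =
          (fun x' (_ : Fin 1) => f x' i) (fun j => q (Sum.inl j))} := by
      ext q
      constructor
      · rintro ⟨w, hw, rfl⟩
        funext i'
        exact congrFun hw i
      · intro hq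
        refine ⟨Sum.elim (fun j => q (Sum.inl j)) (f (fun j => q (Sum.inl j))), rfl, ?_⟩
        funext i''
        rcases i'' with j | i'
        · rfl
        · exact (congrFun hq i').symm
    rw [himg] at h1
    exact h1
  choose G hGdef hGext using hcore
  refine ⟨fun u i => G i u 0, ?_, ?_⟩
  · have hdefi : ∀ i : Fin k, (Subtype.val '' A ∪ D).Definable L
        {p : (Fin n ⊕ Fin k) → M |
          (fun _ : Fin 1 => p (Sum.inr i)) = G i (fun j => p (Sum.inl j))} :=
      fun i => dpull (hGdef i) (Sum.map id (fun _ : Fin 1 => i))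
    have hIdef := Set.definable_biInter_finset hdefi Finset.univ
    convert hIdef using 1
    ext p
    simp only [Set.mem_setOf_eq, Set.mem_iInter, Finset.mem_univ, true_implies]
    constructor
    · intro h i
      funext a
      rw [Fin.eq_zero a]
      exact congrFun h i
    · intro h
      funext i'
      exact congrFun (h i') 0
  · intro x
    funext i
    exact congrFun (hGext i x) 0

end EIPaper
end

section
/- Assume (OP) and (ind)_D hold for M̃ = ⟨M, P⟩ and D ⊆ M. Then for every A ⊆ P, cl_D(A) = dcl(A∪D) ∩ P, where cl_D denotes the definable closure operator in P_ind(D). -/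
open FirstOrder Language Set

universe u v w

namespace EIPaper

section Aux

open Set

variable {L : FirstOrder.Language.{u, v}} {M : Type w} [L.Structure M]

/-- Normal form: a definable set is cut out by an `L`-formula with finitely many parameters. -/
theorem nf_of_definable {α : Type*} {B : Set M} {S : Set (α → M)}
    (h : B.Definable L S) :
    ∃ (k : ℕ) (c : Fin k → M), (∀ i, c i ∈ B) ∧
      ∃ φ : L.Formula (Fin k ⊕ α), S = {x | φ.Realize (Sum.elim c x)} := by
  rw [Set.definable_iff_finitely_definable] at h
  obtain ⟨A0, hA0, h⟩ := h
  rw [Set.definable_iff_exists_formula_sum] at h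
  obtain ⟨φ, rfl⟩ := h
  haveI : Fintype ↥(A0 : Set M) := A0.finite_toSet.fintype
  refine ⟨Fintype.card ↥(A0 : Set M), fun i => ((Fintype.equivFin ↥(A0 : Set M)).symm i : M),
    fun i => hA0 ((Fintype.equivFin ↥(A0 : Set M)).symm i).2,
    φ.relabel (Sum.map (Fintype.equivFin ↥(A0 : Set M)) id), ?_⟩
  ext x
  simp only [Set.mem_setOf_eq, Formula.realize_relabel]
  constructor <;> intro hx <;> [skip; skip] <;>
  · convert hx using 2
    funext z
    rcases z with a | a <;> simp

theorem definable_of_nf {α : Type*} {B : Set M} {S : Set (α → M)} {k : ℕ} {c : Fin k → M}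
    (hc : ∀ i, c i ∈ B) (φ : L.Formula (Fin k ⊕ α))
    (hS : S = {x | φ.Realize (Sum.elim c x)}) : B.Definable L S := by
  rw [Set.definable_iff_exists_formula_sum]
  refine ⟨φ.relabel (Sum.map (fun i => (⟨c i, hc i⟩ : ↥B)) id), ?_⟩
  subst hS
  ext x
  simp only [Set.mem_setOf_eq, Formula.realize_relabel]
  constructor <;> intro hx <;>
  · convert hx using 2
    funext z
    rcases z with a | a <;> simp

theorem definable_coord_lt [LinearOrder M] {B : Set M}
    (hlt : (∅ : Set M).Definable L {x : Fin 2 → M | x 0 < x 1}) {n : ℕ} (i j : Fin n) :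
    B.Definable L {g : Fin n → M | g i < g j} := by
  have h := ((hlt.mono (Set.empty_subset B)).preimage_comp (Matrix.vecCons i ![j]))
  have hset : {g : Fin n → M | g i < g j} =
      (fun g : Fin n → M => g ∘ ![i, j]) ⁻¹' {x : Fin 2 → M | x 0 < x 1} := by
    ext g
    simp [Function.comp]
  rw [hset]
  exact h

theorem definable_coord_mem {B : Set M} {T : Set M}
    (hT : B.Definable L {x : Fin 1 → M | x 0 ∈ T}) {n : ℕ} (i : Fin n) :
    B.Definable L {g : Fin n → M | g i ∈ T} := by
  have h := hT.preimage_comp (fun _ : Fin 1 => i)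
  have hset : {g : Fin n → M | g i ∈ T} =
      (fun g : Fin n → M => g ∘ (fun _ : Fin 1 => i)) ⁻¹' {x : Fin 1 → M | x 0 ∈ T} := by
    ext g
    simp [Function.comp]
  rw [hset]
  exact h

theorem definable_exists_fst {B : Set M} {n : ℕ} {S : Set (Fin (n + 1) → M)}
    (h : B.Definable L S) :
    B.Definable L {x : Fin 1 → M | ∃ g ∈ S, g 0 = x 0} := by
  have h2 := h.image_comp (fun _ : Fin 1 => (0 : Fin (n + 1)))
  have hset : {x : Fin 1 → M | ∃ g ∈ S, g 0 = x 0} =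
      (fun g : Fin (n + 1) → M => g ∘ (fun _ : Fin 1 => (0 : Fin (n + 1)))) '' S := by
    ext x
    simp only [Set.mem_setOf_eq, Set.mem_image]
    constructor
    · rintro ⟨g, hg, hg0⟩
      exact ⟨g, hg, funext fun i => by rw [Subsingleton.elim i 0]; exact hg0⟩
    · rintro ⟨g, hg, hgx⟩
      refine ⟨g, hg, ?_⟩
      rw [← hgx]
      rfl
  rw [hset]
  exact h2

variable (M) in
/-- Syntactic order-interior of a one-variable set. -/
def OInt [LT M] (T : Set M) : Set M :=
  {y : M | ∃ u v : M, u < y ∧ y < v ∧ ∀ w : M, u < w → w < v → w ∈ T}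

theorem OInt_subset [LT M] (T : Set M) : OInt M T ⊆ T := by
  rintro y ⟨u, v, hu, hv, h⟩
  exact h y hu hv

theorem definable_OInt [LinearOrder M] {B : Set M} {T : Set M}
    (hlt : (∅ : Set M).Definable L {x : Fin 2 → M | x 0 < x 1})
    (hT : B.Definable L {x : Fin 1 → M | x 0 ∈ T}) :
    B.Definable L {x : Fin 1 → M | x 0 ∈ OInt M T} := by
  classical
  have hTc : B.Definable L {x : Fin 1 → M | x 0 ∈ Tᶜ} := by
    exact hT.compl
  have hBad : B.Definable L ({h : Fin 4 → M | h 1 < h 3} ∩ {h | h 3 < h 2} ∩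
      {h | h 3 ∈ Tᶜ}) :=
    ((definable_coord_lt hlt 1 3).inter (definable_coord_lt hlt 3 2)).inter
      (definable_coord_mem hTc 3)
  have hImg := hBad.image_comp (Fin.castSucc : Fin 3 → Fin 4)
  have hC3 : B.Definable L {g : Fin 3 → M | ∀ w : M, g 1 < w → w < g 2 → w ∈ T} := by
    have hc := hImg.compl
    have hset : {g : Fin 3 → M | ∀ w : M, g 1 < w → w < g 2 → w ∈ T} =
        ((fun g : Fin 4 → M => g ∘ Fin.castSucc) '' ({h : Fin 4 → M | h 1 < h 3} ∩
          {h | h 3 < h 2} ∩ {h | h 3 ∈ Tᶜ}))ᶜ := by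
      ext g
      simp only [Set.mem_setOf_eq, Set.mem_compl_iff, Set.mem_image, not_exists]
      constructor
      · intro hg h hh
        obtain ⟨⟨⟨h13, h32⟩, h3T⟩, hhg⟩ := hh
        subst hhg
        exact h3T (hg (h 3) h13 h32)
      · intro hg w h1w hw2
        by_contra hwT
        have e1 : (Fin.snoc g w : Fin 4 → M) 1 = g 1 := by
          have h1 : (1 : Fin 4) = Fin.castSucc 1 := rfl
          rw [h1, Fin.snoc_castSucc]
        have e2 : (Fin.snoc g w : Fin 4 → M) 2 = g 2 := by
          have h2 : (2 : Fin 4) = Fin.castSucc 2 := rfl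
          rw [h2, Fin.snoc_castSucc]
        have e3 : (Fin.snoc g w : Fin 4 → M) 3 = w := by
          have h3 : (3 : Fin 4) = Fin.last 3 := rfl
          rw [h3, Fin.snoc_last]
        refine hg (Fin.snoc g w) ⟨⟨⟨?_, ?_⟩, ?_⟩, ?_⟩
        · rw [Set.mem_setOf_eq, e1, e3]; exact h1w
        · rw [Set.mem_setOf_eq, e3, e2]; exact hw2
        · rw [Set.mem_setOf_eq, e3]; exact hwT
        · funext i
          simp [Fin.snoc_castSucc]
    rw [hset]
    exact hc
  have hS3 : B.Definable L (({g : Fin 3 → M | g 1 < g 0} ∩ {g | g 0 < g 2}) ∩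
      {g : Fin 3 → M | ∀ w : M, g 1 < w → w < g 2 → w ∈ T}) :=
    ((definable_coord_lt hlt 1 0).inter (definable_coord_lt hlt 0 2)).inter hC3
  have hproj := definable_exists_fst hS3
  have hset2 : {x : Fin 1 → M | x 0 ∈ OInt M T} =
      {x : Fin 1 → M | ∃ g ∈ (({g : Fin 3 → M | g 1 < g 0} ∩ {g | g 0 < g 2}) ∩
        {g : Fin 3 → M | ∀ w : M, g 1 < w → w < g 2 → w ∈ T}), g 0 = x 0} := by
    ext x
    simp only [Set.mem_setOf_eq, Set.mem_inter_iff, OInt]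
    constructor
    · rintro ⟨u, v, hu, hv, h⟩
      refine ⟨![x 0, u, v], ⟨⟨?_, ?_⟩, ?_⟩, ?_⟩
      · simpa using hu
      · simpa using hv
      · intro w h1 h2
        simp only [Matrix.cons_val_one, Matrix.head_cons] at h1
        exact h w h1 (by simpa using h2)
      · simp
    · rintro ⟨g, ⟨⟨h1, h2⟩, h3⟩, hg0⟩
      rw [← hg0]
      exact ⟨g 1, g 2, h1, h2, h3⟩
  rw [hset2]
  exact hproj


theorem mem_dcl_of_definable_singleton {B : Set M} {b : M}
    (h : B.Definable L {x : Fin 1 → M | x 0 ∈ ({b} : Set M)}) : b ∈ dcl L M B := by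
  have hset : ({fun _ : Fin 1 => b} : Set (Fin 1 → M)) = {x : Fin 1 → M | x 0 ∈ ({b} : Set M)} := by
    ext x
    simp only [Set.mem_singleton_iff, Set.mem_setOf_eq]
    constructor
    · rintro rfl; rfl
    · intro hx
      funext i
      rw [Subsingleton.elim i 0]
      exact hx
  show B.Definable L ({fun _ : Fin 1 => b} : Set (Fin 1 → M))
  rw [hset]
  exact h

theorem subset_dcl_of_finite_aux [LinearOrder M]
    (hlt : (∅ : Set M).Definable L {x : Fin 2 → M | x 0 < x 1}) (n : ℕ) :
    ∀ {B Z : Set M}, Z.Finite → Z.ncard ≤ n →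
      B.Definable L {x : Fin 1 → M | x 0 ∈ Z} → ∀ b ∈ Z, b ∈ dcl L M B := by
  induction n with
  | zero =>
    intro B Z hfin hcard _ b hb
    rw [Nat.le_zero, Set.ncard_eq_zero hfin] at hcard
    rw [hcard] at hb
    exact absurd hb (Set.notMem_empty b)
  | succ n ih =>
    intro B Z hfin hcard hdef b hb
    classical
    set E : Set M := {y : M | ∃ z ∈ Z, z < y} with hE
    have hEdef : B.Definable L {x : Fin 1 → M | x 0 ∈ E} := by
      have hS2 : B.Definable L ({g : Fin 2 → M | g 1 ∈ Z} ∩ {g : Fin 2 → M | g 1 < g 0}) :=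
        (definable_coord_mem hdef 1).inter (definable_coord_lt hlt 1 0)
      have hproj := definable_exists_fst hS2
      have hset : {x : Fin 1 → M | x 0 ∈ E} =
          {x : Fin 1 → M | ∃ g ∈ ({g : Fin 2 → M | g 1 ∈ Z} ∩ {g : Fin 2 → M | g 1 < g 0}),
            g 0 = x 0} := by
        ext x
        simp only [Set.mem_setOf_eq, Set.mem_inter_iff, hE]
        constructor
        · rintro ⟨z, hz, hzx⟩
          exact ⟨![x 0, z], ⟨by simpa using hz, by simpa using hzx⟩, by simp⟩
        · rintro ⟨g, ⟨h1, h2⟩, hg0⟩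
          exact ⟨g 1, h1, hg0 ▸ h2⟩
      rw [hset]
      exact hproj
    by_cases hbE : b ∈ E
    · -- throw away the minimum and use induction
      obtain ⟨m, hmZ, hmin⟩ := Set.exists_min_image Z id hfin ⟨b, hb⟩
      have hmE : m ∉ E := by
        rintro ⟨z, hz, hzm⟩
        exact absurd (hmin z hz) (not_le.2 hzm)
      have hZ' : (Z ∩ E) ⊂ Z := ⟨Set.inter_subset_left, fun hsub => hmE (hsub hmZ).2⟩
      have hcard' : (Z ∩ E).ncard ≤ n := by
        have := Set.ncard_lt_ncard hZ' hfin
        omega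
      have hdef' : B.Definable L {x : Fin 1 → M | x 0 ∈ Z ∩ E} := by
        have := hdef.inter hEdef
        have hset : {x : Fin 1 → M | x 0 ∈ Z ∩ E} =
            {x : Fin 1 → M | x 0 ∈ Z} ∩ {x : Fin 1 → M | x 0 ∈ E} := by
          ext x; simp [Set.mem_inter_iff]
        rw [hset]
        exact this
      exact ih (hfin.subset Set.inter_subset_left) hcard' hdef' b ⟨hb, hbE⟩
    · -- b is the minimum, so {b} = Z \ E is definable
      have hsingle : {x : Fin 1 → M | x 0 ∈ Z} \ {x : Fin 1 → M | x 0 ∈ E} =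
          {x : Fin 1 → M | x 0 ∈ ({b} : Set M)} := by
        ext x
        simp only [Set.mem_diff, Set.mem_setOf_eq, Set.mem_singleton_iff]
        constructor
        · rintro ⟨hxZ, hxE⟩
          rcases lt_trichotomy (x 0) b with h | h | h
          · exact absurd ⟨x 0, hxZ, h⟩ hbE
          · exact h
          · exact absurd ⟨b, hb, h⟩ hxE
        · rintro rfl
          exact ⟨hb, hbE⟩
      exact mem_dcl_of_definable_singleton (hsingle ▸ hdef.sdiff hEdef)

theorem subset_dcl_of_finite [LinearOrder M]
    (hlt : (∅ : Set M).Definable L {x : Fin 2 → M | x 0 < x 1}) {B Z : Set M}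
    (hfin : Z.Finite) (hdef : B.Definable L {x : Fin 1 → M | x 0 ∈ Z}) :
    ∀ b ∈ Z, b ∈ dcl L M B :=
  subset_dcl_of_finite_aux hlt Z.ncard hfin le_rfl hdef

theorem oInt_isOpen [LinearOrder M] (T : Set M) :
    letI : TopologicalSpace M := Preorder.topology M
    IsOpen (OInt M T) := by
  letI : TopologicalSpace M := Preorder.topology M
  haveI : OrderTopology M := ⟨rfl⟩
  rw [isOpen_iff_mem_nhds]
  rintro y ⟨u, v, hu, hv, h⟩
  refine Filter.mem_of_superset (Ioo_mem_nhds hu hv) ?_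
  rintro w ⟨hw1, hw2⟩
  exact ⟨u, v, hw1, hw2, h⟩

theorem ordClosure_singleton_subset [LinearOrder M] (b : M) :
    letI : TopologicalSpace M := Preorder.topology M
    closure ({b} : Set M) ⊆ {b} := by
  letI : TopologicalSpace M := Preorder.topology M
  haveI : OrderTopology M := ⟨rfl⟩
  intro y hy
  rcases lt_trichotomy y b with h | h | h
  · obtain ⟨z, hz1, hz2⟩ := mem_closure_iff.1 hy (Set.Iio b) isOpen_Iio h
    rw [Set.mem_singleton_iff.1 hz2] at hz1
    exact absurd hz1 (lt_irrefl b)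
  · exact h ▸ rfl
  · obtain ⟨z, hz1, hz2⟩ := mem_closure_iff.1 hy (Set.Ioi b) isOpen_Ioi h
    rw [Set.mem_singleton_iff.1 hz2] at hz1
    exact absurd hz1 (lt_irrefl b)

end Aux

section Aux2

open Set

variable {L : FirstOrder.Language.{u, v}} {M : Type w} [L.Structure M]
  [AddCommGroup M] [LinearOrder M] [IsOrderedAddMonoid M] [One M]

theorem diff_OInt_finite (hM : OMinOrderedGroup L M) {T : Set M}
    (hdef : (Set.univ : Set M).Definable L {x : Fin 1 → M | x 0 ∈ T}) :
    (T \ OInt M T).Finite := by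
  obtain ⟨k, t, ht, hT⟩ := hM.omin T hdef
  have hsub : T \ OInt M T ⊆ ⋃ i, (t i \ OInt M T) := by
    intro y hy
    have : y ∈ T := hy.1
    rw [hT] at this
    obtain ⟨i, hi⟩ := Set.mem_iUnion.1 this
    exact Set.mem_iUnion.2 ⟨i, hi, hy.2⟩
  refine Set.Finite.subset (Set.finite_iUnion fun i => ?_) hsub
  have hsubT : t i ⊆ T := by
    rw [hT]; exact Set.subset_iUnion t i
  rcases ht i with ⟨a, ha⟩ | ⟨a, c, ha⟩ | ⟨a, ha⟩ | ⟨a, ha⟩ | ha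
  · exact (Set.finite_singleton a).subset (ha ▸ Set.diff_subset)
  · have : t i \ OInt M T = ∅ := by
      rw [Set.diff_eq_empty]
      intro y hy
      rw [ha] at hy hsubT
      exact ⟨a, c, hy.1, hy.2, fun w h1 h2 => hsubT ⟨h1, h2⟩⟩
    rw [this]; exact Set.finite_empty
  · have : t i \ OInt M T = ∅ := by
      rw [Set.diff_eq_empty]
      intro y hy
      rw [ha] at hy hsubT
      exact ⟨y - 1, a, sub_lt_self y hM.one_pos, hy, fun w _ h2 => hsubT h2⟩
    rw [this]; exact Set.finite_empty
  · have : t i \ OInt M T = ∅ := by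
      rw [Set.diff_eq_empty]
      intro y hy
      rw [ha] at hy hsubT
      exact ⟨a, y + 1, hy, lt_add_of_pos_right y hM.one_pos, fun w h1 _ => hsubT h1⟩
    rw [this]; exact Set.finite_empty
  · have : t i \ OInt M T = ∅ := by
      rw [Set.diff_eq_empty]
      intro y _
      exact ⟨y - 1, y + 1, sub_lt_self y hM.one_pos, lt_add_of_pos_right y hM.one_pos,
        fun w _ _ => hsubT (ha ▸ Set.mem_univ w)⟩
    rw [this]; exact Set.finite_empty

theorem forward_dcl (hM : OMinOrderedGroup L M) {P : Set M} (hOP : OP L M P)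
    {B : Set M} {b : M} {k : ℕ} {c : Fin k → M} (hc : ∀ i, c i ∈ B)
    (φ : L.Formula (Fin k ⊕ Fin 1))
    (hsP : ∀ y : M, (y ∈ P ∧ φ.Realize (Sum.elim c fun _ => y)) ↔ y = b) :
    b ∈ dcl L M B := by
  classical
  have hlt := hM.lt_def
  set s : Set M := {y | φ.Realize (Sum.elim c fun _ => y)} with hs
  have hbP : b ∈ P := ((hsP b).2 rfl).1
  have hbs : b ∈ s := ((hsP b).2 rfl).2
  have hsdef : B.Definable L {x : Fin 1 → M | x 0 ∈ s} := by
    refine definable_of_nf hc φ ?_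
    ext x
    have hx : (fun _ : Fin 1 => x 0) = x := funext fun i => by rw [Subsingleton.elim i 0]
    simp only [Set.mem_setOf_eq, hs]
    rw [hx]
  have hsint_def : B.Definable L {x : Fin 1 → M | x 0 ∈ OInt M s} := definable_OInt hlt hsdef
  by_cases hbint : b ∈ OInt M s
  swap
  · -- b is in the finite definable set s \ OInt s
    have hfin : (s \ OInt M s).Finite := diff_OInt_finite hM (hsdef.mono (Set.subset_univ B))
    have hZdef : B.Definable L {x : Fin 1 → M | x 0 ∈ s \ OInt M s} := by
      have h := hsdef.sdiff hsint_def
      have hset : {x : Fin 1 → M | x 0 ∈ s \ OInt M s} =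
          {x : Fin 1 → M | x 0 ∈ s} \ {x : Fin 1 → M | x 0 ∈ OInt M s} := by
        ext x; simp [Set.mem_diff]
      rw [hset]; exact h
    exact subset_dcl_of_finite hlt hfin hZdef b ⟨hbs, hbint⟩
  · -- main case: b is in the interior of s
    set ρ : Fin k ⊕ Fin 1 → Fin (k + 1) :=
      Sum.elim Fin.castSucc (fun _ => Fin.last k) with hρdef
    set φ₁ : L.Formula (Fin (k + 1)) := φ.relabel ρ with hφ₁
    set V : Set (Fin (k + 1) → M) := {v | φ₁.Realize v ∧ v (Fin.last k) ∈ P} with hV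
    have hρ : ∀ v : Fin (k + 1) → M, φ₁.Realize v ↔ φ.Realize (v ∘ ρ) := fun v =>
      Formula.realize_relabel
    have hpd : PairDef L M P ∅ V := by
      letI : unaryLang.Structure M := unaryStructure M P
      letI ips : (Lpair L).Structure M := pairStructure L M P
      haveI hexp1 : (LHom.sumInl : L →ᴸ Lpair L).IsExpansionOn M :=
        LHom.sumInl_isExpansionOn M
      haveI hexp2 : (LHom.sumInr : unaryLang →ᴸ Lpair L).IsExpansionOn M :=
        LHom.sumInr_isExpansionOn M
      show (∅ : Set M).Definable (Lpair L) V
      rw [Set.empty_definable_iff]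
      refine ⟨(LHom.sumInl.onFormula φ₁) ⊓ ((LHom.sumInr).onFormula
        (Relations.formula (n := 1) (Unit.unit : unaryLang.Relations 1)
          (fun _ => Term.var (Fin.last k)))), ?_⟩
      ext v
      simp only [hV, Set.mem_setOf_eq, Formula.realize_inf, LHom.realize_onFormula,
        Formula.realize_rel, Term.realize_var]
      have e1 := LHom.realize_onFormula (LHom.sumInl : L →ᴸ Lpair L) φ₁ (v := v)
      have e2 := LHom.realize_onFormula (LHom.sumInr : unaryLang →ᴸ Lpair L)
        (Relations.formula (n := 1) (Unit.unit : unaryLang.Relations 1)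
          (fun _ => Term.var (Fin.last k))) (v := v)
      exact ⟨fun h => Formula.realize_inf.2 ⟨e1.2 h.1, e2.2 h.2⟩,
        fun h => ⟨e1.1 (Formula.realize_inf.1 h).1, e2.1 (Formula.realize_inf.1 h).2⟩⟩
    have hW := hOP ∅ (fun d hd => absurd hd.1 (Set.notMem_empty d)) (k + 1) V hpd
    letI : TopologicalSpace M := Preorder.topology M
    haveI : OrderTopology M := ⟨rfl⟩
    have hWcl : ordClosure M V = closure V := rfl
    set ι : M → (Fin (k + 1) → M) := fun y => Fin.snoc c y with hι
    have hιρ : ∀ y : M, (ι y) ∘ ρ = Sum.elim c fun _ => y := by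
      intro y
      funext z
      rcases z with i | j
      · simp [hι, hρdef, Fin.snoc_castSucc]
      · simp [hι, hρdef, Fin.snoc_last]
    have hmemV : ∀ y : M, ι y ∈ V ↔ (y ∈ P ∧ y ∈ s) := by
      intro y
      rw [hV, Set.mem_setOf_eq, hρ, hιρ, hι]
      simp only [Fin.snoc_last, hs, Set.mem_setOf_eq]
      exact ⟨fun h => ⟨h.2, h.1⟩, fun h => ⟨h.2, h.1⟩⟩
    set Wc : Set M := {y | ι y ∈ ordClosure M V} with hWcs
    have hbWc : b ∈ Wc := by
      rw [hWcs, Set.mem_setOf_eq, hWcl]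
      exact subset_closure ((hmemV b).2 ⟨hbP, hbs⟩)
    have hWcP : Wc ⊆ closure P := by
      intro y hy
      rw [hWcs, Set.mem_setOf_eq, hWcl] at hy
      have hVsub : V ⊆ (fun v : Fin (k + 1) → M => v (Fin.last k)) ⁻¹' closure P :=
        fun v hv => subset_closure hv.2
      have hclosed : IsClosed ((fun v : Fin (k + 1) → M => v (Fin.last k)) ⁻¹' closure P) :=
        isClosed_closure.preimage (continuous_apply (Fin.last k))
      have h2 := closure_minimal hVsub hclosed hy
      simpa [hι, Fin.snoc_last] using h2
    have hkey : Wc ∩ OInt M s ⊆ {b} := by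
      rintro y ⟨hy1, hy2⟩
      have h1 : y ∈ OInt M s ∩ closure P := ⟨hy2, hWcP hy1⟩
      have h2 := (oInt_isOpen (M := M) s).inter_closure h1
      have h3 : OInt M s ∩ P ⊆ ({b} : Set M) := by
        rintro z ⟨hz1, hz2⟩
        exact (hsP z).1 ⟨hz2, OInt_subset (M := M) s hz1⟩
      exact ordClosure_singleton_subset b (closure_mono h3 h2)
    have hWdef : B.Definable L (ordClosure M V) := hW.mono (Set.empty_subset B)
    obtain ⟨k', c', hc', φ', hWnf⟩ := nf_of_definable hWdef
    have hWcdef : B.Definable L {x : Fin 1 → M | x 0 ∈ Wc} := by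
      set g : Fin k' ⊕ Fin (k + 1) → Fin (k' + k) ⊕ Fin 1 :=
        Sum.elim (fun i => Sum.inl (Fin.castAdd k i))
          (fun j => Fin.lastCases (Sum.inr 0) (fun jj => Sum.inl (Fin.natAdd k' jj)) j)
        with hg
      have happ : ∀ i, Fin.append c' c i ∈ B := by
        intro i
        refine Fin.addCases (motive := fun i => Fin.append c' c i ∈ B) ?_ ?_ i
        · intro j; rw [Fin.append_left]; exact hc' j
        · intro j; rw [Fin.append_right]; exact hc j
      refine definable_of_nf happ (φ'.relabel g) ?_
      ext x
      rw [Set.mem_setOf_eq, hWcs, Set.mem_setOf_eq, hWnf, Set.mem_setOf_eq,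
        Set.mem_setOf_eq, Formula.realize_relabel]
      have hassign : (Sum.elim (Fin.append c' c) x) ∘ g = Sum.elim c' (ι (x 0)) := by
        funext z
        rcases z with i | j
        · simp [hg, Fin.append_left]
        · induction j using Fin.lastCases with
          | last =>
            simp [hg, hι, Fin.snoc_last]
          | cast jj =>
            simp [hg, hι, Fin.append_right, Fin.snoc_castSucc]
      rw [hassign]
    by_cases hbint2 : b ∈ OInt M Wc
    · -- {b} is itself definable
      have heq : OInt M Wc ∩ OInt M s = ({b} : Set M) := by
        apply subset_antisymm
        · exact fun y hy => hkey ⟨OInt_subset (M := M) Wc hy.1, hy.2⟩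
        · rintro y rfl
          exact ⟨hbint2, hbint⟩
      apply mem_dcl_of_definable_singleton
      have h := (definable_OInt hlt hWcdef).inter hsint_def
      have hset : {x : Fin 1 → M | x 0 ∈ ({b} : Set M)} =
          {x : Fin 1 → M | x 0 ∈ OInt M Wc} ∩ {x : Fin 1 → M | x 0 ∈ OInt M s} := by
        ext x
        rw [← heq]
        simp [Set.mem_inter_iff]
      rw [hset]
      exact h
    · have hfin : (Wc \ OInt M Wc).Finite :=
        diff_OInt_finite hM (hWcdef.mono (Set.subset_univ B))
      have hZdef : B.Definable L {x : Fin 1 → M | x 0 ∈ Wc \ OInt M Wc} := by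
        have h := hWcdef.sdiff (definable_OInt hlt hWcdef)
        have hset : {x : Fin 1 → M | x 0 ∈ Wc \ OInt M Wc} =
            {x : Fin 1 → M | x 0 ∈ Wc} \ {x : Fin 1 → M | x 0 ∈ OInt M Wc} := by
          ext x; simp [Set.mem_diff]
        rw [hset]; exact h
      exact subset_dcl_of_finite hlt hfin hZdef b ⟨hbWc, hbint2⟩

theorem formula_realize_subst {L' : FirstOrder.Language} {N : Type*} [L'.Structure N]
    {α β : Type*} (φ : L'.Formula α) (tf : α → L'.Term β) (v : β → N) :
    Formula.Realize (φ.subst tf) v ↔ φ.Realize (fun a => (tf a).realize v) :=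
  BoundedFormula.realize_subst

theorem backward_clInd {P D : Set M} {A : Set ↥P} {b : M} (hbP : b ∈ P)
    {k : ℕ} {c : Fin k → M} (hc : ∀ i, c i ∈ Subtype.val '' A ∪ D)
    (φ : L.Formula (Fin k ⊕ Fin 1))
    (hEq : ∀ x : Fin 1 → M, φ.Realize (Sum.elim c x) ↔ x = fun _ => b) :
    (⟨b, hbP⟩ : ↥P) ∈ clInd L M P D A := by
  classical
  letI : (indLang L M D).Structure ↥P := indStructure L M P D
  have hval : ∀ i : Fin k, c i ∉ D → ∃ p : ↥P, p ∈ A ∧ (p : M) = c i := by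
    intro i h
    rcases hc i with hA | hD
    · obtain ⟨p, hp, hpc⟩ := hA
      exact ⟨p, hp, hpc⟩
    · exact absurd hD h
  choose pa hpaA hpac using hval
  set σ : Fin k ⊕ Fin 1 → (L[[D]]).Term (Fin k ⊕ Fin 1) :=
    Sum.elim (fun i => if h : c i ∈ D then ((L.con (⟨c i, h⟩ : ↥D)).term)
      else Term.var (Sum.inl i)) (fun j => Term.var (Sum.inr j)) with hσ
  set χ : (L[[D]]).Formula (Fin k ⊕ Fin 1) :=
    ((L.lhomWithConstants D).onFormula φ).subst σ with hχ
  set ρ : Fin k ⊕ Fin 1 → Fin (k + 1) :=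
    Sum.elim Fin.castSucc (fun _ => Fin.last k) with hρ
  set ts : Fin (k + 1) → ((indLang L M D)[[A]]).Term (Fin 1) :=
    fun j => Fin.lastCases (Term.var (0 : Fin 1))
      (fun i => if h : c i ∈ D then Term.var (0 : Fin 1)
        else (((indLang L M D).con (⟨pa i h, hpaA i h⟩ : ↥A)).term)) j with hts
  show A.Definable (indLang L M D) ({fun _ : Fin 1 => (⟨b, hbP⟩ : ↥P)} : Set (Fin 1 → ↥P))
  refine ⟨Relations.formula
    (Sum.inl (χ.relabel ρ) : ((indLang L M D)[[A]]).Relations (k + 1)) ts, ?_⟩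
  ext v
  rw [Set.mem_singleton_iff, Set.mem_setOf_eq]
  refine Iff.trans ?_ Formula.realize_rel.symm
  show (v = fun _ => (⟨b, hbP⟩ : ↥P)) ↔
    Formula.Realize (M := M) (χ.relabel ρ) (fun i => (((ts i).realize v : ↥P) : M))
  rw [Formula.realize_relabel, hχ, formula_realize_subst, LHom.realize_onFormula]
  have hass : (fun z : Fin k ⊕ Fin 1 =>
        (σ z).realize ((fun i => (((ts i).realize v : ↥P) : M)) ∘ ρ)) =
      Sum.elim c (fun _ => ((v 0 : ↥P) : M)) := by
    funext z
    rcases z with i | j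
    · by_cases h : c i ∈ D
      · simp [hσ, dif_pos h]
      · simp only [hσ, Sum.elim_inl, dif_neg h, Term.realize_var, Function.comp_apply,
          hρ, Sum.elim_inl]
        simp only [hts, Fin.lastCases_castSucc, dif_neg h]
        rw [Term.realize_con]
        exact hpac i h
    · simp only [hσ, Sum.elim_inr, Term.realize_var, Function.comp_apply, hρ, Sum.elim_inr]
      simp [hts, Fin.lastCases_last]
  rw [hass, hEq (fun _ => ((v 0 : ↥P) : M))]
  constructor
  · intro h
    have h0 : v 0 = (⟨b, hbP⟩ : ↥P) := congrFun h 0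
    funext i
    show ((v 0 : ↥P) : M) = b
    rw [h0]
  · intro h
    have h0 : ((v 0 : ↥P) : M) = b := congrFun h 0
    funext i
    rw [Subsingleton.elim i 0]
    exact Subtype.ext h0

end Aux2



/-- Under (OP) and (ind)_D, for every `A ⊆ P` one has `cl_D(A) = dcl(A ∪ D) ∩ P`. -/
theorem statement8 {L : FirstOrder.Language.{u, v}} {M : Type w} [L.Structure M]
    [AddCommGroup M] [LinearOrder M] [IsOrderedAddMonoid M] [One M] (hM : OMinOrderedGroup L M)
    {P D : Set M} (hOP : OP L M P) (hind : IndD L M P D) (A : Set ↥P) :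
    Subtype.val '' clInd L M P D A = dcl L M (Subtype.val '' A ∪ D) ∩ P := by
  classical
  apply Set.eq_of_subset_of_subset
  · rintro x ⟨b', hb', rfl⟩
    obtain ⟨Y, hYdef, htr⟩ := hind A 1 ({fun _ : Fin 1 => b'} : Set (Fin 1 → ↥P)) hb'
    obtain ⟨k, c, hc, φ, hYnf⟩ := nf_of_definable hYdef
    refine ⟨?_, b'.2⟩
    apply forward_dcl hM hOP hc φ
    intro y
    constructor
    · rintro ⟨hyP, hyre⟩
      have hmem : (fun _ : Fin 1 => (⟨y, hyP⟩ : ↥P)) ∈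
          {x : Fin 1 → ↥P | (fun i => ((x i : M))) ∈ Y} := by
        rw [Set.mem_setOf_eq, hYnf]
        exact hyre
      rw [← htr, Set.mem_singleton_iff] at hmem
      have h0 : (⟨y, hyP⟩ : ↥P) = b' := congrFun hmem 0
      exact congrArg Subtype.val h0
    · rintro rfl
      refine ⟨b'.2, ?_⟩
      have hmem : (fun _ : Fin 1 => b') ∈ {x : Fin 1 → ↥P | (fun i => ((x i : M))) ∈ Y} := by
        rw [← htr]
        rfl
      rw [Set.mem_setOf_eq, hYnf] at hmem
      exact hmem
  · rintro x ⟨hdcl, hxP⟩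
    obtain ⟨k, c, hc, φ, hnf⟩ := nf_of_definable hdcl
    rw [Set.ext_iff] at hnf
    refine ⟨⟨x, hxP⟩, ?_, rfl⟩
    apply backward_clInd hxP hc φ
    intro xx
    constructor
    · intro h
      exact Set.mem_singleton_iff.1 ((hnf xx).2 h)
    · rintro rfl
      exact (hnf (fun _ => x)).1 rfl

end EIPaper
end

section
/- Assume (OP), (dcl)_D and (ind)_D hold for M̃ = ⟨M, P⟩ and D ⊆ M. Let M' be the expansion of M by constant symbols for all elements of P, and let M̃' = ⟨M', P⟩. Then (OP), (dcl)_D and (ind)_D hold for M̃' and D. -/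
open FirstOrder Language Set

universe u v w

namespace EIPaper

section Transfer

variable {K : FirstOrder.Language.{u, v}} {M : Type w} [K.Structure M]

/-- The language map from `(K[[P]])[[A]]` to `K[[A ∪ P]]`. -/
def doubleToUnion (K : FirstOrder.Language.{u, v}) (M : Type w) (A P : Set M) :
    (K[[↥P]])[[↥A]] →ᴸ K[[↥(A ∪ P)]] where
  onFunction := fun {n} F =>
    match n, F with
    | 0, Sum.inl (Sum.inl f) => Sum.inl f
    | _ + 1, Sum.inl (Sum.inl f) => Sum.inl f
    | 0, Sum.inl (Sum.inr p) => Sum.inr ⟨(p : M), Set.mem_union_right _ p.2⟩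
    | _ + 1, Sum.inl (Sum.inr p) => PEmpty.elim p
    | 0, Sum.inr a => Sum.inr ⟨(a : M), Set.mem_union_left _ a.2⟩
    | _ + 1, Sum.inr a => PEmpty.elim a
  onRelation := fun {n} R =>
    match R with
    | Sum.inl (Sum.inl r) => Sum.inl r
    | Sum.inl (Sum.inr r) => Empty.elim r
    | Sum.inr r => Empty.elim r

/-- The language map from `K[[A ∪ P]]` to `(K[[P]])[[A]]`. -/
noncomputable def unionToDouble (K : FirstOrder.Language.{u, v}) (M : Type w) (A P : Set M) :
    K[[↥(A ∪ P)]] →ᴸ (K[[↥P]])[[↥A]] where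
  onFunction := fun {n} F =>
    match n, F with
    | 0, Sum.inl f => Sum.inl (Sum.inl f)
    | _ + 1, Sum.inl f => Sum.inl (Sum.inl f)
    | 0, Sum.inr x =>
      @dite _ ((x : M) ∈ P) (Classical.propDecidable _)
        (fun h => Sum.inl (Sum.inr ⟨(x : M), h⟩))
        (fun h => Sum.inr ⟨(x : M), ((Set.mem_union _ _ _).1 x.2).resolve_right h⟩)
    | _ + 1, Sum.inr x => PEmpty.elim x
  onRelation := fun {n} R =>
    match R with
    | Sum.inl r => Sum.inl (Sum.inl r)
    | Sum.inr r => Empty.elim r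

theorem doubleToUnion_isExpansionOn (A P : Set M) :
    (doubleToUnion K M A P).IsExpansionOn M := by
  constructor
  · intro n F x
    match n, F with
    | 0, Sum.inl (Sum.inl f) => rfl
    | _ + 1, Sum.inl (Sum.inl f) => rfl
    | 0, Sum.inl (Sum.inr p) => rfl
    | 0, Sum.inr a => rfl
  · intro n R x
    match R with
    | Sum.inl (Sum.inl r) => rfl

theorem unionToDouble_isExpansionOn (A P : Set M) :
    (unionToDouble K M A P).IsExpansionOn M := by
  constructor
  · intro n F x
    match n, F with
    | 0, Sum.inl f => rfl
    | _ + 1, Sum.inl f => rfl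
    | 0, Sum.inr p =>
      dsimp only [unionToDouble]
      by_cases h : ((p : ↥(A ∪ P)) : M) ∈ P
      · erw [dif_pos h]; rfl
      · erw [dif_neg h]; rfl
  · intro n R x
    match R with
    | Sum.inl r => rfl

/-- Definability in `K[[P]]` with parameters `A` is definability in `K` with parameters
`A ∪ P`. -/
theorem definable_withConstants_iff {A P : Set M} {α : Type*} {S : Set (α → M)} :
    A.Definable (K[[↥P]]) S ↔ (A ∪ P).Definable K S := by
  constructor
  · intro h
    have h0 := (Set.definable_iff_empty_definable_with_params).1 h
    haveI := doubleToUnion_isExpansionOn (K := K) (M := M) A P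
    exact (Set.definable_iff_empty_definable_with_params).2
      (h0.map_expansion (doubleToUnion K M A P))
  · intro h
    have h0 := (Set.definable_iff_empty_definable_with_params).1 h
    haveI := unionToDouble_isExpansionOn (K := K) (M := M) A P
    exact (Set.definable_iff_empty_definable_with_params).2
      (h0.map_expansion (unionToDouble K M A P))

end Transfer



section Pair

variable {K : FirstOrder.Language.{u, v}} {M : Type w} [K.Structure M]

/-- Shuffling `(K[[P]]).sum unaryLang` into `(K.sum unaryLang)[[P]]`. -/
def pairShuffleTo (K : FirstOrder.Language.{u, v}) (M : Type w) (P : Set M) :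
    Lpair (K[[↥P]]) →ᴸ (Lpair K)[[↥P]] where
  onFunction := fun {n} F =>
    match n, F with
    | 0, Sum.inl (Sum.inl f) => Sum.inl (Sum.inl f)
    | _ + 1, Sum.inl (Sum.inl f) => Sum.inl (Sum.inl f)
    | 0, Sum.inl (Sum.inr p) => Sum.inr p
    | _ + 1, Sum.inl (Sum.inr p) => PEmpty.elim p
    | _, Sum.inr e => Empty.elim e
  onRelation := fun {n} R =>
    match n, R with
    | _, Sum.inl (Sum.inl r) => Sum.inl (Sum.inl r)
    | _, Sum.inl (Sum.inr e) => Empty.elim e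
    | 1, Sum.inr u => Sum.inl (Sum.inr u)
    | 0, Sum.inr u => Empty.elim u
    | _ + 2, Sum.inr u => Empty.elim u

/-- Shuffling `(K.sum unaryLang)[[P]]` into `(K[[P]]).sum unaryLang`. -/
def pairShuffleFrom (K : FirstOrder.Language.{u, v}) (M : Type w) (P : Set M) :
    (Lpair K)[[↥P]] →ᴸ Lpair (K[[↥P]]) where
  onFunction := fun {n} F =>
    match n, F with
    | 0, Sum.inl (Sum.inl f) => Sum.inl (Sum.inl f)
    | _ + 1, Sum.inl (Sum.inl f) => Sum.inl (Sum.inl f)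
    | _, Sum.inl (Sum.inr e) => Empty.elim e
    | 0, Sum.inr p => Sum.inl (Sum.inr p)
    | _ + 1, Sum.inr p => PEmpty.elim p
  onRelation := fun {n} R =>
    match n, R with
    | _, Sum.inl (Sum.inl r) => Sum.inl (Sum.inl r)
    | 1, Sum.inl (Sum.inr u) => Sum.inr u
    | 0, Sum.inl (Sum.inr u) => Empty.elim u
    | _ + 2, Sum.inl (Sum.inr u) => Empty.elim u
    | _, Sum.inr e => Empty.elim e

theorem pairShuffleTo_isExpansionOn (P : Set M) :
    letI := pairStructure (K[[↥P]]) M P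
    letI := pairStructure K M P
    (pairShuffleTo K M P).IsExpansionOn M := by
  letI := pairStructure (K[[↥P]]) M P
  letI := pairStructure K M P
  constructor
  · intro n F x
    match n, F with
    | 0, Sum.inl (Sum.inl f) => rfl
    | _ + 1, Sum.inl (Sum.inl f) => rfl
    | 0, Sum.inl (Sum.inr p) => rfl
  · intro n R x
    match n, R with
    | 0, Sum.inl (Sum.inl r) => rfl
    | 1, Sum.inl (Sum.inl r) => rfl
    | _ + 2, Sum.inl (Sum.inl r) => rfl
    | 0, Sum.inl (Sum.inr e) => exact Empty.elim e
    | 1, Sum.inl (Sum.inr e) => exact Empty.elim e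
    | _ + 2, Sum.inl (Sum.inr e) => exact Empty.elim e
    | 1, Sum.inr u => rfl
    | 0, Sum.inr u => exact Empty.elim u
    | _ + 2, Sum.inr u => exact Empty.elim u

theorem pairShuffleFrom_isExpansionOn (P : Set M) :
    letI := pairStructure (K[[↥P]]) M P
    letI := pairStructure K M P
    (pairShuffleFrom K M P).IsExpansionOn M := by
  letI := pairStructure (K[[↥P]]) M P
  letI := pairStructure K M P
  constructor
  · intro n F x
    match n, F with
    | 0, Sum.inl (Sum.inl f) => rfl
    | _ + 1, Sum.inl (Sum.inl f) => rfl
    | 0, Sum.inr p => rfl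
  · intro n R x
    match n, R with
    | 0, Sum.inl (Sum.inl r) => rfl
    | 1, Sum.inl (Sum.inl r) => rfl
    | _ + 2, Sum.inl (Sum.inl r) => rfl
    | 1, Sum.inl (Sum.inr u) => rfl
    | 0, Sum.inl (Sum.inr u) => exact Empty.elim u
    | _ + 2, Sum.inl (Sum.inr u) => exact Empty.elim u
    | 0, Sum.inr e => exact Empty.elim e
    | 1, Sum.inr e => exact Empty.elim e
    | _ + 2, Sum.inr e => exact Empty.elim e

theorem pairDef_withConstants_iff (P A : Set M) {α : Type*} (S : Set (α → M)) :
    PairDef (K[[↥P]]) M P A S ↔ PairDef K M P (A ∪ P) S := by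
  letI := pairStructure (K[[↥P]]) M P
  letI := pairStructure K M P
  show A.Definable (Lpair (K[[↥P]])) S ↔ (A ∪ P).Definable (Lpair K) S
  rw [← definable_withConstants_iff (K := Lpair K)]
  constructor
  · intro h
    haveI := pairShuffleTo_isExpansionOn (K := K) (M := M) P
    exact h.map_expansion (pairShuffleTo K M P)
  · intro h
    haveI := pairShuffleFrom_isExpansionOn (K := K) (M := M) P
    exact h.map_expansion (pairShuffleFrom K M P)

end Pair


section DclTransfer

variable {K : FirstOrder.Language.{u, v}} {M : Type w} [K.Structure M]

theorem mem_dcl_self {S : Set M} {a : M} (ha : a ∈ S) : a ∈ dcl K M S := by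
  refine ⟨Term.equal (Term.var 0) ((K.con ⟨a, ha⟩).term), ?_⟩
  ext v
  simp only [Set.mem_singleton_iff, Set.mem_setOf_eq, Formula.realize_equal,
    Term.realize_var, Term.realize_constants, coe_con]
  constructor
  · intro h; rw [h]
  · intro h; funext i; rw [Subsingleton.elim i 0, h]

theorem dcl_withConstants (P S : Set M) : dcl (K[[↥P]]) M S = dcl K M (S ∪ P) :=
  Set.ext fun _ => definable_withConstants_iff

theorem op_withConstants [LinearOrder M] {P : Set M} (hOP : OP K M P) :
    OP (K[[↥P]]) M P := by
  intro A hA n V hV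
  have hV' : PairDef K M P (A ∪ P) V := (pairDef_withConstants_iff P A V).1 hV
  have hA' : DclIndepOver K M P ((A ∪ P) \ P) := by
    rw [Set.union_diff_right]
    intro d hd hmem
    have h1 := hA d hd
    rw [dcl_withConstants] at h1
    have e : (P ∪ ((A \ P) \ {d})) ∪ P = P ∪ ((A \ P) \ {d}) :=
      Set.ext fun x => by simp only [Set.mem_union]; tauto
    rw [e] at h1
    exact h1 hmem
  exact definable_withConstants_iff.2 (hOP (A ∪ P) hA' n V hV')

theorem dclD_withConstants {P D : Set M} : DclD (K[[↥P]]) M P D := by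
  intro B C hB hC
  have e1 : (B ∪ D) ∪ P = P ∪ D := by
    ext x
    simp only [Set.mem_union]
    constructor
    · rintro ((h | h) | h)
      · exact Or.inl (hB h)
      · exact Or.inr h
      · exact Or.inl h
    · rintro (h | h)
      · exact Or.inr h
      · exact Or.inl (Or.inr h)
  have e2 : (C ∪ D) ∪ P = P ∪ D := by
    ext x
    simp only [Set.mem_union]
    constructor
    · rintro ((h | h) | h)
      · exact Or.inl (hC h)
      · exact Or.inr h
      · exact Or.inl h
    · rintro (h | h)
      · exact Or.inr h
      · exact Or.inl (Or.inr h)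
  simp only [dcl_withConstants, e1, e2, Set.inter_self]
  have hX : dcl K M (P ∪ D) ∩ P = P :=
    Set.ext fun x => ⟨fun h => h.2, fun h => ⟨mem_dcl_self (Or.inl h), h⟩⟩
  rw [hX]
  have e3 : (P ∪ D) ∪ P = P ∪ D := Set.ext fun x => by simp only [Set.mem_union]; tauto
  rw [e3]

end DclTransfer

section Ind

variable {K : FirstOrder.Language.{u, v}} {M : Type w} [K.Structure M] {P D : Set M}

/-- The trace on `P` of a `(K[[P]])[[D]]`-definable set, with coordinates given by variables
or fixed elements of `P`, is definable in the `D`-induced structure over `P` with parameters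
from `P`. -/
theorem indDef_core {l : ℕ} (φ : ((K[[↥P]])[[D]]).Formula (Fin l)) {β : Type*}
    (ρ : Fin l → β ⊕ ↥P) :
    letI := indStructure K M P D
    (Set.univ : Set ↥P).Definable (indLang K M D)
      {v : β → ↥P |
        φ.Realize (fun i =>
          Sum.elim (fun b => ((v b : ↥P) : M)) (fun p : ↥P => (p : M)) (ρ i))} := by
  letI := indStructure K M P D
  classical
  have hW : (D ∪ P).Definable K {w : Fin l → M | φ.Realize w} :=
    (definable_withConstants_iff (K := K) (M := M)).1
      ((Set.definable_iff_empty_definable_with_params).2 (Set.empty_definable_iff.2 ⟨φ, rfl⟩))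
  obtain ⟨A0, hA0, hA0d⟩ := Set.definable_iff_finitely_definable.1 hW
  obtain ⟨ψ, hψ⟩ := Set.definable_iff_exists_formula_sum.1 hA0d
  let κ := {a : ↥(A0 : Set M) // (a : M) ∉ D}
  let pval : κ → ↥P := fun a =>
    ⟨(a.1 : M), ((Set.mem_union _ _ _).1 (hA0 a.1.2)).resolve_left a.2⟩
  let k := Fintype.card κ
  let eκ : κ ≃ Fin k := Fintype.equivFin κ
  let E : (κ ⊕ Fin l) ≃ Fin (k + l) :=
    (Equiv.sumCongr eκ (Equiv.refl (Fin l))).trans finSumFinEquiv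
  let σ : (↥(A0 : Set M) ⊕ Fin l) → (K[[D]]).Term (κ ⊕ Fin l) :=
    Sum.elim
      (fun a => if h : (a : M) ∈ D then ((K.con ⟨(a : M), h⟩).term)
        else Term.var (Sum.inl ⟨a, h⟩))
      (fun i => Term.var (Sum.inr i))
  let χ : (K[[D]]).Formula (Fin (k + l)) :=
    Formula.relabel E (BoundedFormula.subst ((K.lhomWithConstants D).onFormula ψ) σ)
  let τ : Fin (k + l) → ((indLang K M D)[[(Set.univ : Set ↥P)]]).Term β := fun i =>
    Sum.elim
      (fun a : κ =>
        (((indLang K M D).con (⟨pval a, Set.mem_univ _⟩ : ↥(Set.univ : Set ↥P))).term))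
      (fun g : Fin l =>
        Sum.elim (fun b : β => Term.var b)
          (fun p : ↥P =>
            (((indLang K M D).con (⟨p, Set.mem_univ _⟩ : ↥(Set.univ : Set ↥P))).term)) (ρ g))
      (E.symm i)
  refine ⟨Relations.formula (Sum.inl χ) τ, ?_⟩
  ext v
  have hτ : ∀ x : κ ⊕ Fin l, (((τ (E x)).realize v : ↥P) : M)
      = Sum.elim (fun a : κ => ((pval a : ↥P) : M))
          (fun g => Sum.elim (fun b => ((v b : ↥P) : M)) (fun p : ↥P => (p : M)) (ρ g)) x := by
    intro x
    unfold τ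
    simp only [Equiv.symm_apply_apply]
    cases x with
    | inl a => simp
    | inr g =>
      cases hρ : ρ g with
      | inl b => simp [hρ]
      | inr p => simp [hρ]
  have key : (fun a => (σ a).realize (M := M)
        ((fun i => (((τ i).realize v : ↥P) : M)) ∘ E))
      = Sum.elim (fun a : ↥(A0 : Set M) => (a : M))
          (fun i => Sum.elim (fun b => ((v b : ↥P) : M)) (fun p : ↥P => (p : M)) (ρ i)) := by
    funext a
    cases a with
    | inl a =>
      unfold σ
      by_cases h : (a : M) ∈ D
      · simp [h]
      · simp only [Sum.elim_inl, dif_neg h, Term.realize_var, Function.comp_apply]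
        rw [hτ (Sum.inl ⟨a, h⟩)]
        rfl
    | inr i =>
      unfold σ
      simp only [Sum.elim_inr, Term.realize_var, Function.comp_apply]
      rw [hτ (Sum.inr i)]
      rfl
  simp only [Set.mem_setOf_eq]
  erw [Formula.realize_rel]
  show φ.Realize (fun i => Sum.elim (fun b => ((v b : ↥P) : M)) (fun p : ↥P => (p : M)) (ρ i))
      ↔ χ.Realize (M := M) (fun i => (((τ i).realize v : ↥P) : M))
  unfold χ
  rw [Formula.realize_relabel]
  rw [show ((fun i => (((τ i).realize v : ↥P) : M)) ∘ ⇑E)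
      = ((fun i => (((τ i).realize v : ↥P) : M)) ∘ E) from rfl]
  have hsub : Formula.Realize
      (BoundedFormula.subst ((K.lhomWithConstants D).onFormula ψ) σ)
      ((fun i => (((τ i).realize v : ↥P) : M)) ∘ E)
      ↔ ψ.Realize (Sum.elim (fun a : ↥(A0 : Set M) => (a : M))
          (fun i => Sum.elim (fun b => ((v b : ↥P) : M)) (fun p : ↥P => (p : M)) (ρ i))) := by
    rw [Formula.Realize, BoundedFormula.realize_subst, ← key]
    exact (K.lhomWithConstants D).realize_onBoundedFormula _
  rw [hsub]
  exact Set.ext_iff.1 hψ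
    (fun i => Sum.elim (fun b => ((v b : ↥P) : M)) (fun p : ↥P => (p : M)) (ρ i))

/-- Terms of the induced language with constants are variables or elements of `P`. -/
theorem ind_term_cases {A : Set ↥P} {γ : Type*}
    (t : ((indLang (K[[↥P]]) M D)[[A]]).Term γ) :
    letI := indStructure (K[[↥P]]) M P D
    ∃ r : γ ⊕ ↥P, ∀ v : γ → ↥P, t.realize v = Sum.elim v id r := by
  letI := indStructure (K[[↥P]]) M P D
  match t with
  | Term.var i => exact ⟨Sum.inl i, fun v => rfl⟩
  | @Term.func _ _ j f ts =>
    match j, f with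
    | 0, Sum.inr a => exact ⟨Sum.inr ((a : ↥P)), fun v => rfl⟩
    | _ + 1, Sum.inr a => exact PEmpty.elim a
    | _, Sum.inl e => exact Empty.elim e

/-- Equalities of variables and constants from `P` are definable in the induced structure. -/
theorem indDef_eq_helper {β : Type*} (r₁ r₂ : β ⊕ ↥P) :
    letI := indStructure K M P D
    (Set.univ : Set ↥P).Definable (indLang K M D)
      {v : β → ↥P | Sum.elim v id r₁ = Sum.elim v id r₂} := by
  letI := indStructure K M P D
  let tm : β ⊕ ↥P → ((indLang K M D)[[(Set.univ : Set ↥P)]]).Term β :=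
    Sum.elim (fun b => Term.var b)
      (fun p => (((indLang K M D).con (⟨p, Set.mem_univ _⟩ : ↥(Set.univ : Set ↥P))).term))
  refine ⟨Term.equal (tm r₁) (tm r₂), ?_⟩
  ext v
  simp only [Set.mem_setOf_eq, Formula.realize_equal]
  unfold tm
  cases r₁ <;> cases r₂ <;> simp

/-- A set definable in the `D`-induced structure on `P` by `⟨M, P⟩` is definable in the
`D`-induced structure on `P` by `M`, with parameters from `P`. -/
theorem indDef_withConstants {A : Set ↥P} {n : ℕ} {X : Set (Fin n → ↥P)}
    (h : IndDef (K[[↥P]]) M P D A X) : IndDef K M P D Set.univ X := by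
  letI := indStructure (K[[↥P]]) M P D
  letI := indStructure K M P D
  obtain ⟨Φ, hΦ⟩ := h
  have claim : ∀ (m : ℕ) (Θ : ((indLang (K[[↥P]]) M D)[[A]]).BoundedFormula (Fin n) m),
      (Set.univ : Set ↥P).Definable (indLang K M D)
        {v : Fin n ⊕ Fin m → ↥P |
          Θ.Realize (fun i => v (Sum.inl i)) (fun j => v (Sum.inr j))} := by
    intro m Θ
    induction Θ with
    | @falsum k =>
      have he : {v : Fin n ⊕ Fin k → ↥P |
          BoundedFormula.Realize (L := (indLang (K[[↥P]]) M D)[[A]]) (M := ↥P)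
            BoundedFormula.falsum (fun i => v (Sum.inl i)) (fun j => v (Sum.inr j))}
          = (∅ : Set (Fin n ⊕ Fin k → ↥P)) :=
        Set.eq_empty_iff_forall_notMem.2 fun v hv => hv
      rw [he]
      exact Set.definable_empty
    | @equal m t₁ t₂ =>
      obtain ⟨r₁, h₁⟩ := ind_term_cases (P := P) (D := D) t₁
      obtain ⟨r₂, h₂⟩ := ind_term_cases (P := P) (D := D) t₂
      convert indDef_eq_helper (K := K) (M := M) (P := P) (D := D) r₁ r₂ using 1
      ext v
      have hv : (Sum.elim (fun i => v (Sum.inl i)) (fun j => v (Sum.inr j)) :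
          Fin n ⊕ Fin m → ↥P) = v := funext fun x => by cases x <;> rfl
      simp only [Set.mem_setOf_eq]
      show (t₁.realize (Sum.elim (fun i => v (Sum.inl i)) (fun j => v (Sum.inr j)))
          = t₂.realize (Sum.elim (fun i => v (Sum.inl i)) (fun j => v (Sum.inr j)))) ↔ _
      rw [hv, h₁ v, h₂ v]
    | @rel m l R ts =>
      match R with
      | Sum.inr e => exact Empty.elim e
      | Sum.inl φ₀ =>
        have hts := fun i => ind_term_cases (P := P) (D := D) (ts i)
        choose ρ hρ using hts
        convert indDef_core (K := K) (M := M) (P := P) (D := D) φ₀ ρ using 1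
        ext v
        have hv : (Sum.elim (fun i => v (Sum.inl i)) (fun j => v (Sum.inr j)) :
            Fin n ⊕ Fin m → ↥P) = v := funext fun x => by cases x <;> rfl
        simp only [Set.mem_setOf_eq]
        show Formula.Realize (M := M) φ₀
            (fun i => ((Term.realize
              (Sum.elim (fun i => v (Sum.inl i)) (fun j => v (Sum.inr j))) (ts i) : ↥P) : M))
          ↔ _
        refine iff_of_eq (congrArg _ (funext fun i => ?_))
        rw [hρ i, hv]
        cases hri : ρ i <;> simp [hri]
    | @imp m θ₁ θ₂ ih₁ ih₂ =>
      convert (ih₁.compl.union ih₂) using 1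
      ext v
      simp only [Set.mem_setOf_eq, BoundedFormula.realize_imp, Set.mem_union,
        Set.mem_compl_iff, imp_iff_not_or]
    | @all m θ ih =>
      have hc := (ih.compl.image_comp (Sum.map id Fin.castSucc)).compl
      convert hc using 1
      ext v
      simp only [Set.mem_setOf_eq, BoundedFormula.realize_all, Set.mem_compl_iff,
        Set.mem_image, not_exists, not_and]
      constructor
      · intro hall g hg hgv
        apply hg
        have h1 : (fun i => g (Sum.inl i)) = fun i => v (Sum.inl i) := by
          funext i; rw [← hgv]; rfl
        have h2 : (fun j => g (Sum.inr j))
            = Fin.snoc (fun j => v (Sum.inr j)) (g (Sum.inr (Fin.last m))) := by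
          funext j
          refine Fin.lastCases ?_ ?_ j
          · rw [Fin.snoc_last]
          · intro j'
            rw [Fin.snoc_castSucc, ← hgv]
            rfl
        rw [h1, h2]
        exact hall _
      · intro hni y
        by_contra hny
        exact hni (Sum.elim (fun i => v (Sum.inl i)) (Fin.snoc (fun j => v (Sum.inr j)) y))
          (fun hre => hny hre)
          (funext fun x => by cases x <;> simp [Fin.snoc_castSucc])
  have h0 := claim 0 Φ
  have himg := h0.image_comp Sum.inl
  show (Set.univ : Set ↥P).Definable (indLang K M D) X
  have hreal : ∀ (x y : Fin 0 → ↥P) (w : Fin n → ↥P),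
      BoundedFormula.Realize Φ w x ↔ BoundedFormula.Realize Φ w y := fun x y w => by
    rw [Subsingleton.elim x y]
  have hXeq : X = (fun g : Fin n ⊕ Fin 0 → ↥P => g ∘ Sum.inl) ''
      {v : Fin n ⊕ Fin 0 → ↥P |
        BoundedFormula.Realize Φ (fun i => v (Sum.inl i)) (fun j => v (Sum.inr j))} := by
    ext v
    rw [hΦ]
    constructor
    · intro hv
      exact ⟨Sum.elim v (fun j => Fin.elim0 j), (hreal default _ v).1 hv, rfl⟩
    · rintro ⟨g, hg, rfl⟩
      exact (hreal (fun j => g (Sum.inr j)) default (fun i => g (Sum.inl i))).1 hg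
  rw [hXeq]
  exact himg

end Ind

/-- If (OP), (dcl)_D and (ind)_D hold for `⟨M, P⟩` and `D`, then they hold for `⟨M', P⟩`
and `D`, where `M'` is the expansion of `M` by constants for all elements of `P`. -/
theorem statement11 {L : FirstOrder.Language.{u, v}} {M : Type w} [L.Structure M]
    [AddCommGroup M] [LinearOrder M] [IsOrderedAddMonoid M] [One M] (hM : OMinOrderedGroup L M)
    {P D : Set M} (hOP : OP L M P) (hdcl : DclD L M P D) (hind : IndD L M P D) :
    OP (L[[↥P]]) M P ∧ DclD (L[[↥P]]) M P D ∧ IndD (L[[↥P]]) M P D := by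
  refine ⟨op_withConstants hOP, dclD_withConstants, ?_⟩
  intro A n X hX
  obtain ⟨Y, hY, hXY⟩ := hind Set.univ n X (indDef_withConstants hX)
  refine ⟨Y, ?_, hXY⟩
  rw [Subtype.coe_image_univ] at hY
  exact definable_withConstants_iff.2
    (hY.mono (fun x hx => hx.elim (fun h => Or.inr h) (fun h => Or.inl (Or.inr h))))

end EIPaper
end

section
/- Suppose (OP) holds for M̃ = ⟨M, P⟩ and D ⊆ M is dcl-independent over P. Then for every A ⊆ P, dcl_{L(P)}(A∪D) = dcl(A∪D), where dcl_{L(P)} denotes definable closure in M̃. -/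
open FirstOrder Language Set

universe u v w

namespace EIPaper

lemma mem_dcl_of_mem {L : FirstOrder.Language.{u, v}} {M : Type w} [L.Structure M]
    {S : Set M} {b : M} (hb : b ∈ S) : b ∈ dcl L M S := by
  refine ⟨Term.equal (Term.var 0) (Constants.term (L.con (⟨b, hb⟩ : S))), ?_⟩
  ext x
  simp only [Set.mem_singleton_iff, Set.mem_setOf_eq, Formula.realize_equal, Term.realize_var,
    Term.realize_con]
  constructor
  · rintro rfl; rfl
  · intro h; funext i; fin_cases i; exact h

/-- Under (OP) with `D` dcl-independent over `P`: for every `A ⊆ P`,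
`dcl_{L(P)}(A ∪ D) = dcl(A ∪ D)`. -/
theorem statement14 {L : FirstOrder.Language.{u, v}} {M : Type w} [L.Structure M]
    [AddCommGroup M] [LinearOrder M] [IsOrderedAddMonoid M] [One M] (hM : OMinOrderedGroup L M)
    {P D : Set M} (hOP : OP L M P) (hD : DclIndepOver L M P D) :
    ∀ A : Set M, A ⊆ P → dclPair L M P (A ∪ D) = dcl L M (A ∪ D) := by
  intro A hA
  -- D is disjoint from P
  have hDP : ∀ d ∈ D, d ∉ P := by
    intro d hd hdP
    exact hD d hd (mem_dcl_of_mem (Set.mem_union_left _ hdP))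
  have hset : (A ∪ D) \ P = D := by
    ext x
    constructor
    · rintro ⟨hx | hx, hxP⟩
      · exact absurd (hA hx) hxP
      · exact hx
    · intro hx
      exact ⟨Set.mem_union_right _ hx, hDP x hx⟩
  apply Set.Subset.antisymm
  · -- dclPair ⊆ dcl via (OP)
    intro b hb
    have hindep : DclIndepOver L M P ((A ∪ D) \ P) := by
      rw [hset]; exact hD
    have hres := hOP (A ∪ D) hindep 1 ({fun _ : Fin 1 => b} : Set (Fin 1 → M)) hb
    have hcl : ordClosure M ({fun _ : Fin 1 => b} : Set (Fin 1 → M))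
        = ({fun _ : Fin 1 => b} : Set (Fin 1 → M)) := by
      unfold ordClosure
      letI : TopologicalSpace M := Preorder.topology M
      haveI : OrderTopology M := ⟨rfl⟩
      exact closure_singleton
    rwa [hcl] at hres
  · -- dcl ⊆ dclPair since L(P) expands L
    intro b hb
    show PairDef L M P (A ∪ D) _
    unfold PairDef
    letI : unaryLang.Structure M := unaryStructure M P
    unfold pairStructure Lpair
    exact Set.Definable.map_expansion (L' := L.sum unaryLang) hb LHom.sumInl

end EIPaper
end

section
/- Suppose D ⊆ M is dcl-independent over P. If (OP) and (dcl')_D hold for M̃ = ⟨M, P⟩ and D, then (dcl)_D holds. -/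
open FirstOrder Language Set

universe u v w

namespace EIPaper

section AuxDcl

variable {L' : FirstOrder.Language} {N : Type*} [L'.Structure N]

lemma singleton_fun_eq {a : N} {x : Fin 1 → N} :
    x ∈ ({fun _ : Fin 1 => a} : Set (Fin 1 → N)) ↔ x 0 = a := by
  constructor
  · rintro rfl; rfl
  · intro h
    funext i
    have : i = 0 := Subsingleton.elim _ _
    rw [this, h]

lemma mem_dcl_of_mem_s15 {B : Set N} {a : N} (h : a ∈ B) : a ∈ dcl L' N B := by
  refine ⟨Term.equal (Term.var 0) (Constants.term (L'.con (⟨a, h⟩ : B))), ?_⟩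
  ext x
  rw [singleton_fun_eq]
  simp [Formula.realize_equal]

lemma dcl_mono {A B : Set N} (h : A ⊆ B) : dcl L' N A ⊆ dcl L' N B :=
  fun _ hb => Set.Definable.mono hb h

/-- Key lemma: if `S` is `A`-definable and `A ⊆ dcl(B)` then `S` is `B`-definable. -/
lemma definable_of_subset_dcl {A B : Set N} {α : Type*} [Finite α] {S : Set (α → N)}
    (hS : A.Definable L' S) (hAB : A ⊆ dcl L' N B) : B.Definable L' S := by
  classical
  obtain ⟨A0, hA0A, hA0⟩ := Set.definable_iff_finitely_definable.mp hS
  obtain ⟨φ, rfl⟩ := Set.definable_iff_exists_formula_sum.mp hA0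
  have hmem : ∀ a : (A0 : Set N),
      B.Definable L' ({fun _ : Fin 1 => (a : N)} : Set (Fin 1 → N)) :=
    fun a => hAB (hA0A a.2)
  set T : Set (((A0 : Set N) ⊕ α) → N) :=
    {z | φ.Realize z} ∩
      ⋂ a ∈ (Finset.univ : Finset (A0 : Set N)),
        (fun g : ((A0 : Set N) ⊕ α) → N => g ∘ (fun _ : Fin 1 => Sum.inl a)) ⁻¹'
          ({fun _ : Fin 1 => (a : N)} : Set (Fin 1 → N)) with hT
  have hTdef : B.Definable L' T := by
    refine Set.Definable.inter ?_
      (Set.definable_biInter_finset (fun a => (hmem a).preimage_comp _) _)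
    exact (Set.empty_definable_iff.mpr ⟨φ, rfl⟩).mono (Set.empty_subset B)
  have heq : (fun g : (((A0 : Set N)) ⊕ α) → N => g ∘ Sum.inr) '' T
      = {v | φ.Realize (Sum.elim Subtype.val v)} := by
    ext v
    constructor
    · rintro ⟨z, ⟨hz1, hz2⟩, rfl⟩
      have hconst : ∀ a : (A0 : Set N), z (Sum.inl a) = a.1 := fun a =>
        congrFun (Set.mem_iInter₂.mp hz2 a (Finset.mem_univ a)) 0
      have hzz : Sum.elim Subtype.val (z ∘ Sum.inr) = z := by
        funext i
        cases i with
        | inl a => exact (hconst a).symm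
        | inr b => rfl
      show φ.Realize (Sum.elim Subtype.val (z ∘ Sum.inr))
      rw [hzz]
      exact hz1
    · intro hv
      refine ⟨Sum.elim Subtype.val v, ⟨hv, ?_⟩, ?_⟩
      · exact Set.mem_iInter₂.mpr fun a _ => rfl
      · rfl
  have himg := hTdef.image_comp_embedding
    (⟨Sum.inr, Sum.inr_injective⟩ : α ↪ ((A0 : Set N) ⊕ α))
  simp only [Function.Embedding.coeFn_mk] at himg
  rwa [heq] at himg

end AuxDcl

section AuxMain

variable {L : FirstOrder.Language.{u, v}} {M : Type w} [L.Structure M]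

lemma ordClosure_singleton [LinearOrder M] {α : Type*} (f : α → M) :
    ordClosure M ({f} : Set (α → M)) = {f} := by
  letI : TopologicalSpace M := Preorder.topology M
  haveI : OrderTopology M := ⟨rfl⟩
  show closure {f} = {f}
  exact closure_singleton

end AuxMain

/-- If `D` is dcl-independent over `P`, then (OP) and (dcl')_D imply (dcl)_D. -/
theorem statement15 {L : FirstOrder.Language.{u, v}} {M : Type w} [L.Structure M]
    [AddCommGroup M] [LinearOrder M] [IsOrderedAddMonoid M] [One M] (hM : OMinOrderedGroup L M)
    {P D : Set M} (hD : DclIndepOver L M P D) (hOP : OP L M P) (hdcl' : DclD' L M P D) :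
    DclD L M P D := by
  intro B C hBP hCP
  letI : unaryLang.Structure M := unaryStructure M P
  letI : (Lpair L).Structure M := pairStructure L M P
  haveI hexp : (LHom.sumInl : L →ᴸ Lpair L).IsExpansionOn M :=
    ⟨fun _ _ => rfl, fun _ _ => rfl⟩
  set A : Set M := dcl L M (B ∪ D) ∩ dcl L M (C ∪ D) ∩ P with hA
  -- the pair-dcl coincides with the generic dcl in the pair language
  have hpair_eq : ∀ X : Set M, dclPair L M P X = dcl (Lpair L) M X := fun _ => rfl
  apply Set.Subset.antisymm
  · -- easy direction
    intro α hα
    have h1 : A ∪ D ⊆ dcl L M (B ∪ D) := by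
      rintro x (hx | hx)
      · exact hx.1.1
      · exact mem_dcl_of_mem_s15 (Or.inr hx)
    have h2 : A ∪ D ⊆ dcl L M (C ∪ D) := by
      rintro x (hx | hx)
      · exact hx.1.2
      · exact mem_dcl_of_mem_s15 (Or.inr hx)
    exact ⟨definable_of_subset_dcl hα h1, definable_of_subset_dcl hα h2⟩
  · -- hard direction
    rintro α ⟨hαB, hαC⟩
    have hαPD : α ∈ dcl L M (P ∪ D) :=
      dcl_mono (Set.union_subset_union_left D hBP) hαB
    obtain ⟨k, q, hqP, hq⟩ := hdcl' α hαPD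
    rw [hpair_eq] at hq
    -- α belongs to dcl(range q ∪ D)
    have hα_q : α ∈ dcl L M (Set.range q ∪ D) := by
      rw [hq]
      exact mem_dcl_of_mem_s15 (Or.inl rfl)
    -- each q i belongs to A
    have key : ∀ (E : Set M), E ⊆ P → α ∈ dcl L M (E ∪ D) →
        ∀ i, q i ∈ dcl L M (E ∪ D) := by
      intro E hEP hαE i
      -- q i is pair-definable over {α} ∪ D
      have hqi_pair : q i ∈ dcl (Lpair L) M ({α} ∪ D) := by
        rw [← hq]
        exact mem_dcl_of_mem_s15 (Or.inl ⟨i, rfl⟩)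
      -- {α} ∪ D ⊆ dclPair(E ∪ D)
      have hsub : ({α} : Set M) ∪ D ⊆ dcl (Lpair L) M (E ∪ D) := by
        rintro x (hx | hx)
        · rw [Set.mem_singleton_iff] at hx
          subst hx
          exact @Set.Definable.map_expansion _ _ _ _ _ _ _ _ hαE LHom.sumInl hexp
        · exact mem_dcl_of_mem_s15 (Or.inr hx)
      have hqiE_pair : q i ∈ dcl (Lpair L) M (E ∪ D) :=
        definable_of_subset_dcl hqi_pair hsub
      -- independence hypothesis for OP
      have hindep : DclIndepOver L M P ((E ∪ D) \ P) := by
        intro d hd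
        have hdD : d ∈ D := by
          rcases hd.1 with h | h
          · exact absurd (hEP h) hd.2
          · exact h
        intro hcon
        refine hD d hdD (dcl_mono ?_ hcon)
        rintro x (hx | hx)
        · exact Or.inl hx
        · refine Or.inr ⟨?_, hx.2⟩
          rcases hx.1.1 with h | h
          · exact absurd (hEP h) hx.1.2
          · exact h
      -- apply (OP) to the singleton {q i}
      have hclos := hOP (E ∪ D) hindep 1
        ({fun _ : Fin 1 => q i} : Set (Fin 1 → M)) hqiE_pair
      rwa [ordClosure_singleton] at hclos
    have hqA : ∀ i, q i ∈ A :=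
      fun i => ⟨⟨key B hBP hαB i, key C hCP hαC i⟩, hqP i⟩
    refine definable_of_subset_dcl hα_q ?_
    rintro x (hx | hx)
    · obtain ⟨i, rfl⟩ := hx
      exact mem_dcl_of_mem_s15 (Or.inl (hqA i))
    · exact mem_dcl_of_mem_s15 (Or.inr hx)

end EIPaper
end
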